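/- arXiv:cs/0405020 — 9 statements merged into one kernel-verified Lean document; each statement's English description precedes it below -/
import Mathlib

section
/- Let A be a real symmetric n×n matrix, and let u, v be nonzero vectors in R^n with v orthogonal to both u and Au. Then the second largest eigenvalue λ₂ of A satisfies λ₂ ≥ min(R_A(u), R_A(v)), where R_A(w) = (Aw,w)/(w,w) is the Rayleigh quotient. -/
/-!
In the coordinates given by an orthonormal eigenbasis of `A`, the form
`q x = ⟨A x, x⟩ - μ ⟨x, x⟩` becomes the diagonal form `∑ (λₖ - μ) xₖ²`. For `μ` the smaller
of the two Rayleigh quotients, `q` is nonnegative at `u` and at `v`, and the two vectors are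
orthogonal both for `⟨·, ·⟩` and for `q`, so `q ≥ 0` on the whole plane they span. If at most
one weight `λᵢ₀ - μ` were nonnegative, `q` would be negative on the hyperplane `xᵢ₀ = 0`,
which meets that plane in a nonzero vector.
-/

open Matrix

theorem Matrix.dotProduct_self_pos {n R : Type*} [Fintype n] [Ring R] [LinearOrder R]
    [IsStrictOrderedRing R] {v : n → R} (hv : v ≠ 0) : 0 < v ⬝ᵥ v :=
  (Finset.sum_nonneg fun i _ => mul_self_nonneg (v i)).lt_of_ne'
    (dotProduct_self_eq_zero.not.mpr hv)

namespace Matrix.IsHermitian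

variable {n : Type*} [Fintype n] [DecidableEq n] {A : Matrix n n ℝ} (hA : A.IsHermitian)

theorem dotProduct_eq_sum_eigenvectorBasis (x y : n → ℝ) :
    x ⬝ᵥ y = ∑ k, (⇑(hA.eigenvectorBasis k) ⬝ᵥ x) * (⇑(hA.eigenvectorBasis k) ⬝ᵥ y) := by
  have := hA.eigenvectorBasis.sum_inner_mul_inner (WithLp.toLp 2 y) (WithLp.toLp 2 x)
  simp only [EuclideanSpace.inner_eq_star_dotProduct, star_trivial] at this
  rw [← this]
  exact Finset.sum_congr rfl fun k _ => by rw [dotProduct_comm x, mul_comm]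

theorem mulVec_dotProduct_eq_sum_eigenvalues (x y : n → ℝ) :
    (A *ᵥ x) ⬝ᵥ y = ∑ k, hA.eigenvalues k *
      ((⇑(hA.eigenvectorBasis k) ⬝ᵥ x) * (⇑(hA.eigenvectorBasis k) ⬝ᵥ y)) := by
  rw [hA.dotProduct_eq_sum_eigenvectorBasis]
  refine Finset.sum_congr rfl fun k _ => ?_
  have hAt : Aᵀ = A := by simpa [conjTranspose_eq_transpose_of_trivial] using hA.eq
  rw [dotProduct_mulVec, ← mulVec_transpose, hAt, hA.mulVec_eigenvectorBasis, smul_dotProduct,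
    smul_eq_mul, mul_assoc]

theorem mulVec_dotProduct_sub_mul_dotProduct (μ : ℝ) (x y : n → ℝ) :
    (A *ᵥ x) ⬝ᵥ y - μ * (x ⬝ᵥ y) = ∑ k, (hA.eigenvalues k - μ) *
      ((⇑(hA.eigenvectorBasis k) ⬝ᵥ x) * (⇑(hA.eigenvectorBasis k) ⬝ᵥ y)) := by
  rw [hA.mulVec_dotProduct_eq_sum_eigenvalues, hA.dotProduct_eq_sum_eigenvectorBasis x y,
    Finset.mul_sum, ← Finset.sum_sub_distrib]
  exact Finset.sum_congr rfl fun k _ => by ring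

end Matrix.IsHermitian

section DiagonalForm

variable {ι : Type*} [Fintype ι] {w c d : ι → ℝ}

theorem sum_mul_mul_self_neg {e : ι → ℝ} (hw : ∀ k, e k ≠ 0 → w k < 0) (he : e ≠ 0) :
    ∑ k, w k * (e k * e k) < 0 := by
  obtain ⟨i, hi⟩ := Function.ne_iff.mp he
  refine Finset.sum_neg' (fun k _ => ?_) ⟨i, Finset.mem_univ i, ?_⟩
  · by_cases hk : e k = 0
    · simp [hk]
    · exact mul_nonpos_of_nonpos_of_nonneg (hw k hk).le (mul_self_nonneg _)
  · exact mul_neg_of_neg_of_pos (hw i hi) (mul_self_pos.mpr hi)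

theorem sum_mul_smul_add_smul_mul_self (hcd : ∑ k, w k * (c k * d k) = 0) (a b : ℝ) :
    ∑ k, w k * ((a • c + b • d) k * (a • c + b • d) k) =
      a ^ 2 * ∑ k, w k * (c k * c k) + b ^ 2 * ∑ k, w k * (d k * d k) := by
  have hexpand : ∀ k, w k * ((a • c + b • d) k * (a • c + b • d) k) =
      a ^ 2 * (w k * (c k * c k)) + b ^ 2 * (w k * (d k * d k)) +
        2 * a * b * (w k * (c k * d k)) := fun k => by
    simp only [Pi.add_apply, Pi.smul_apply, smul_eq_mul]; ring
  simp only [hexpand, Finset.sum_add_distrib, ← Finset.mul_sum, hcd, mul_zero, add_zero]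

theorem sum_mul_mul_self_neg_or {i₀ : ι} (hw : ∀ k, k ≠ i₀ → w k < 0) (hcd : c ⬝ᵥ d = 0)
    (hwcd : ∑ k, w k * (c k * d k) = 0) (hc : c ≠ 0) (hd : d ≠ 0) :
    ∑ k, w k * (c k * c k) < 0 ∨ ∑ k, w k * (d k * d k) < 0 := by
  by_cases hci₀ : c i₀ = 0
  · exact .inl <| sum_mul_mul_self_neg (fun k hk => hw k <| by rintro rfl; exact hk hci₀) hc
  set e := d i₀ • c + (-c i₀) • d with he_def
  have he₀ : e i₀ = 0 := by simp only [he_def, Pi.add_apply, Pi.smul_apply, smul_eq_mul]; ring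
  have he : e ≠ 0 := by
    intro he
    have : c i₀ * (d ⬝ᵥ d) = 0 := by
      simpa [he_def, add_dotProduct, hcd] using congrArg (· ⬝ᵥ d) he
    exact hd (dotProduct_self_eq_zero.mp ((mul_eq_zero.mp this).resolve_left hci₀))
  have hneg := sum_mul_mul_self_neg (fun k hk => hw k <| by rintro rfl; exact hk he₀) he
  rw [sum_mul_smul_add_smul_mul_self hwcd] at hneg
  by_contra! h
  nlinarith [mul_nonneg (sq_nonneg (d i₀)) h.1, mul_nonneg (sq_nonneg (-c i₀)) h.2]

theorem exists_ne_nonneg_of_sum_mul_mul_self_nonneg (hcd : c ⬝ᵥ d = 0)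
    (hwcd : ∑ k, w k * (c k * d k) = 0) (hc : c ≠ 0) (hd : d ≠ 0)
    (hwc : 0 ≤ ∑ k, w k * (c k * c k)) (hwd : 0 ≤ ∑ k, w k * (d k * d k)) :
    ∃ i j, i ≠ j ∧ 0 ≤ w i ∧ 0 ≤ w j := by
  by_contra! h
  obtain ⟨i₀, hi₀⟩ : ∃ i₀, ∀ k, k ≠ i₀ → w k < 0 := by
    by_cases hex : ∃ i, 0 ≤ w i
    · obtain ⟨i, hi⟩ := hex
      exact ⟨i, fun k hk => h i k hk.symm hi⟩
    · push Not at hex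
      obtain ⟨i, -⟩ := Function.ne_iff.mp hc
      exact ⟨i, fun k _ => hex k⟩
  rcases sum_mul_mul_self_neg_or hi₀ hcd hwcd hc hd with h | h <;> linarith

end DiagonalForm

/-- Let `A` be a real symmetric `n × n` matrix, and let `u, v` be nonzero
vectors with `v` orthogonal to both `u` and `A u`.  Then the second largest eigenvalue of `A`
is at least `min (R_A u) (R_A v)`, where `R_A w = ⟨A w, w⟩ / ⟨w, w⟩` is the Rayleigh quotient.
Here "the second largest eigenvalue is at least `μ`" is expressed by saying that two distinct
indices carry eigenvalues that are at least `μ`. -/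
theorem stmt0 (n : ℕ) (A : Matrix (Fin n) (Fin n) ℝ) (hA : A.IsHermitian)
    (u v : Fin n → ℝ) (hu : u ≠ 0) (hv : v ≠ 0)
    (huv : v ⬝ᵥ u = 0) (hvAu : v ⬝ᵥ A.mulVec u = 0) :
    ∃ i j : Fin n, i ≠ j ∧
      min ((A.mulVec u ⬝ᵥ u) / (u ⬝ᵥ u)) ((A.mulVec v ⬝ᵥ v) / (v ⬝ᵥ v)) ≤ hA.eigenvalues i ∧
      min ((A.mulVec u ⬝ᵥ u) / (u ⬝ᵥ u)) ((A.mulVec v ⬝ᵥ v) / (v ⬝ᵥ v)) ≤ hA.eigenvalues j := by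
  set μ := min ((A.mulVec u ⬝ᵥ u) / (u ⬝ᵥ u)) ((A.mulVec v ⬝ᵥ v) / (v ⬝ᵥ v))
  set coord : (Fin n → ℝ) → Fin n → ℝ := fun x k => ⇑(hA.eigenvectorBasis k) ⬝ᵥ x
  have hcoord_ne : ∀ x : Fin n → ℝ, x ≠ 0 → coord x ≠ 0 := fun x hx hcx => hx <| by
    rw [← dotProduct_self_eq_zero, hA.dotProduct_eq_sum_eigenvectorBasis]
    simp [coord, funext_iff.mp hcx]
  have hform_nonneg : ∀ x : Fin n → ℝ, x ≠ 0 → μ ≤ (A *ᵥ x ⬝ᵥ x) / (x ⬝ᵥ x) →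
      0 ≤ ∑ k, (hA.eigenvalues k - μ) * (coord x k * coord x k) := fun x hx hμ => by
    rw [← hA.mulVec_dotProduct_sub_mul_dotProduct, sub_nonneg]
    exact (le_div_iff₀ (dotProduct_self_pos hx)).mp hμ
  obtain ⟨i, j, hij, hi, hj⟩ := exists_ne_nonneg_of_sum_mul_mul_self_nonneg
    (w := fun k => hA.eigenvalues k - μ)
    ((hA.dotProduct_eq_sum_eigenvectorBasis u v).symm.trans (dotProduct_comm u v ▸ huv))
    (by rw [← hA.mulVec_dotProduct_sub_mul_dotProduct, dotProduct_comm, hvAu,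
      dotProduct_comm, huv, mul_zero, sub_zero])
    (hcoord_ne u hu) (hcoord_ne v hv)
    (hform_nonneg u hu (min_le_left _ _)) (hform_nonneg v hv (min_le_right _ _))
  exact ⟨i, j, hij, sub_nonneg.mp hi, sub_nonneg.mp hj⟩
end

section
/- The adjacency operator A_T of the infinite d-regular tree, acting on ℓ²(vertices), has operator norm at most 2√(d-1). -/
/-!
Root the tree at a vertex `r` and weight each oriented edge `v → w` by `s = √(d-1)` if `w` is
the parent of `v` and by `s⁻¹` if `w` is a child. Opposite orientations get reciprocal weights,
and since a vertex has at most one parent, the weights leaving any vertex sum to at most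
`s + (d-1)/s = 2s`. The weighted Cauchy–Schwarz inequality (Schur test) then bounds `‖A f‖²`
by `(2s)² ‖f‖²`.
-/

open Finset

theorem Finset.sum_ite_sqrt_le_two_mul_sqrt {ι : Type*} (N : Finset ι) (p : ι → Prop)
    [DecidablePred p] (hp : #(N.filter p) ≤ 1) (hN : 2 ≤ #N) :
    ∑ x ∈ N, (if p x then √(#N - 1 : ℝ) else (√(#N - 1 : ℝ))⁻¹) ≤ 2 * √(#N - 1 : ℝ) := by
  set s := √(#N - 1 : ℝ)
  have hN' : (2 : ℝ) ≤ #N := by exact_mod_cast hN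
  have hs : 1 ≤ s := Real.one_le_sqrt.2 (by linarith)
  have hss : s ^ 2 = #N - 1 := Real.sq_sqrt (by linarith)
  have hcard : (#(N.filter p) : ℝ) + #(N.filter (¬ p ·)) = #N := by
    exact_mod_cast card_filter_add_card_filter_not p
  have hp' : (#(N.filter p) : ℝ) ≤ 1 := by exact_mod_cast hp
  rw [sum_ite, sum_const, sum_const, nsmul_eq_mul, nsmul_eq_mul, ← div_eq_mul_inv,
    ← le_sub_iff_add_le', div_le_iff₀ (by positivity)]
  nlinarith

theorem Finset.sq_sum_le_sum_mul_sum_mul_sq {ι : Type*} (s : Finset ι) (f a b : ι → ℝ)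
    (ha : ∀ i ∈ s, 0 ≤ a i) (hb : ∀ i ∈ s, 0 ≤ b i) (hab : ∀ i ∈ s, 1 ≤ a i * b i) :
    (∑ i ∈ s, f i) ^ 2 ≤ (∑ i ∈ s, a i) * ∑ i ∈ s, b i * f i ^ 2 :=
  sum_sq_le_sum_mul_sum_of_sq_le_mul s ha (fun i hi => mul_nonneg (hb i hi) (sq_nonneg _))
    fun i hi => by nlinarith [hab i hi, sq_nonneg (f i)]

namespace SimpleGraph

variable {V : Type*} {G : SimpleGraph V}

theorem IsAcyclic.eq_of_adj_of_dist_eq_add_one (hG : G.IsAcyclic) {u v w₁ w₂ : V}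
    (h₁ : G.Adj w₁ v) (h₂ : G.Adj w₂ v) (hd₁ : G.dist u v = G.dist u w₁ + 1)
    (hd₂ : G.dist u v = G.dist u w₂ + 1) : w₁ = w₂ := by
  have hreach : G.Reachable u v := Reachable.of_dist_ne_zero (by omega)
  obtain ⟨p₁, -, hp₁⟩ := (hreach.trans h₁.symm.reachable).exists_path_of_dist
  obtain ⟨p₂, -, hp₂⟩ := (hreach.trans h₂.symm.reachable).exists_path_of_dist
  have hpath₁ := (p₁.concat h₁).isPath_of_length_eq_dist (by simp [hp₁, hd₁])
  have hpath₂ := (p₂.concat h₂).isPath_of_length_eq_dist (by simp [hp₂, hd₂])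
  have h := (hG.subsingleton_path u v).elim ⟨_, hpath₁⟩ ⟨_, hpath₂⟩
  exact (Walk.concat_inj (Subtype.mk.inj h)).1

theorem IsTree.card_filter_dist_lt_le_one (hG : G.IsTree) [G.LocallyFinite] (r v : V) :
    #((G.neighborFinset v).filter (G.dist r · < G.dist r v)) ≤ 1 := by
  refine card_le_one.2 fun w₁ hw₁ w₂ hw₂ => ?_
  simp only [mem_filter, mem_neighborFinset] at hw₁ hw₂
  have hd₁ := hG.dist_eq_dist_add_one_of_adj r hw₁.1
  have hd₂ := hG.dist_eq_dist_add_one_of_adj r hw₂.1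
  exact hG.isAcyclic.eq_of_adj_of_dist_eq_add_one (u := r) hw₁.1.symm hw₂.1.symm
    (by omega) (by omega)

theorem sum_biUnion_neighborFinset_comm [DecidableEq V] [G.LocallyFinite] {M : Type*}
    [AddCommMonoid M] (T : Finset V) (F : V → V → M) (hF : ∀ v, ∀ w ∉ T, F v w = 0) :
    ∑ v ∈ T.biUnion (G.neighborFinset ·), ∑ w ∈ G.neighborFinset v, F v w
      = ∑ w ∈ T, ∑ v ∈ G.neighborFinset w, F v w := by
  have hrestrict : ∀ v, ∑ w ∈ (G.neighborFinset v).filter (· ∈ T), F v w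
      = ∑ w ∈ G.neighborFinset v, F v w :=
    fun v => sum_filter_of_ne fun w _ hne => by_contra fun hw => hne (hF v w hw)
  simp_rw [← hrestrict]
  refine sum_comm' fun v w => ?_
  simp only [mem_filter, mem_biUnion, mem_neighborFinset]
  exact ⟨fun ⟨_, hvw, hw⟩ => ⟨hvw.symm, hw⟩, fun ⟨hwv, hw⟩ => ⟨⟨w, hw, hwv⟩, hwv.symm, hw⟩⟩

theorem tsum_sq_sum_neighborFinset_le [G.LocallyFinite] (a : V → V → ℝ) (C : ℝ)
    (ha : ∀ v w, G.Adj v w → 0 ≤ a v w) (ha_mul : ∀ v w, G.Adj v w → 1 ≤ a v w * a w v)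
    (hC : ∀ v, ∑ w ∈ G.neighborFinset v, a v w ≤ C) (f : V →₀ ℝ) :
    ∑' v, (∑ w ∈ G.neighborFinset v, f w) ^ 2 ≤ C ^ 2 * ∑ v ∈ f.support, f v ^ 2 := by
  classical
  have hadj : ∀ {v w}, w ∈ G.neighborFinset v → G.Adj v w := (mem_neighborFinset ..).1
  have hcs : ∀ v, (∑ w ∈ G.neighborFinset v, f w) ^ 2
      ≤ C * ∑ w ∈ G.neighborFinset v, a w v * f w ^ 2 := fun v =>
    (sq_sum_le_sum_mul_sum_mul_sq _ _ _ _ (fun w hw => ha v w (hadj hw))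
      (fun w hw => ha w v (hadj hw).symm) fun w hw => ha_mul v w (hadj hw)).trans
    (mul_le_mul_of_nonneg_right (hC v) (sum_nonneg fun w hw =>
      mul_nonneg (ha w v (hadj hw).symm) (sq_nonneg _)))
  set S := f.support.biUnion (G.neighborFinset ·)
  have hzero : ∀ v ∉ S, (∑ w ∈ G.neighborFinset v, f w) ^ 2 = 0 := by
    intro v hv
    rw [sum_eq_zero fun w hw => ?_, zero_pow two_ne_zero]
    by_contra hne
    exact hv (mem_biUnion.2 ⟨w, Finsupp.mem_support_iff.2 hne,
      (mem_neighborFinset ..).2 (hadj hw).symm⟩)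
  calc ∑' v, (∑ w ∈ G.neighborFinset v, f w) ^ 2
      = ∑ v ∈ S, (∑ w ∈ G.neighborFinset v, f w) ^ 2 :=
        tsum_eq_sum hzero
    _ ≤ ∑ v ∈ S, C * ∑ w ∈ G.neighborFinset v, a w v * f w ^ 2 :=
        sum_le_sum fun v _ => hcs v
    _ = ∑ w ∈ f.support, C * (f w ^ 2 * ∑ v ∈ G.neighborFinset w, a w v) := by
        rw [← mul_sum, sum_biUnion_neighborFinset_comm _ _ fun v w hw => by
          simp [Finsupp.notMem_support_iff.1 hw], mul_sum]
        simp_rw [mul_sum, mul_comm (a _ _)]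
    _ ≤ ∑ w ∈ f.support, C * (f w ^ 2 * C) := by
        refine sum_le_sum fun w _ => mul_le_mul_of_nonneg_left
          (mul_le_mul_of_nonneg_left (hC w) (sq_nonneg _)) ?_
        exact (sum_nonneg fun v hv => ha w v (hadj hv)).trans (hC w)
    _ = C ^ 2 * ∑ v ∈ f.support, f v ^ 2 := by
        rw [mul_sum]; exact sum_congr rfl fun _ _ => by ring

end SimpleGraph

theorem stmt1_general {V : Type*} (G : SimpleGraph V) [G.LocallyFinite]
    (d : ℕ) (hd : 2 ≤ d) (hreg : G.IsRegularOfDegree d)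
    (hconn : G.Connected) (hacyc : G.IsAcyclic) (f : V →₀ ℝ) :
    ∑' v : V, (∑ w ∈ G.neighborFinset v, f w) ^ 2
      ≤ (2 * Real.sqrt ((d : ℝ) - 1)) ^ 2 * ∑ v ∈ f.support, (f v) ^ 2 := by
  obtain ⟨r⟩ := hconn.nonempty
  have hT : G.IsTree := ⟨hconn, hacyc⟩
  have hs : 0 < √((d : ℝ) - 1) := Real.sqrt_pos.2 (by rw [sub_pos]; exact_mod_cast hd)
  refine SimpleGraph.tsum_sq_sum_neighborFinset_le
    (fun v w => if G.dist r w < G.dist r v then √((d : ℝ) - 1) else (√((d : ℝ) - 1))⁻¹) _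
    (fun v w _ => by split_ifs <;> positivity) (fun v w hvw => ?_) (fun v => ?_) f
  · rcases hT.dist_eq_dist_add_one_of_adj r hvw with h | h <;> simp [h, hs.ne']
  · have hcard : #(G.neighborFinset v) = d := (G.card_neighborFinset_eq_degree v).trans (hreg v)
    have := sum_ite_sqrt_le_two_mul_sqrt _ _ (hT.card_filter_dist_lt_le_one r v) (hcard ▸ hd)
    rwa [hcard] at this

/-- The adjacency operator `A_T` of the infinite `d`-regular tree
(a connected, acyclic, `d`-regular simple graph), acting on `ℓ²` of the vertices, has
operator norm at most `2√(d-1)`.  Since the finitely supported functions are dense in `ℓ²`,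
this is expressed as the bound `‖A_T f‖² ≤ (2√(d-1))² ‖f‖²` for every finitely supported
`f : V →₀ ℝ`. -/
theorem stmt1 {V : Type*} [DecidableEq V] (G : SimpleGraph V) [G.LocallyFinite]
    (d : ℕ) (hd : 2 ≤ d) (hreg : G.IsRegularOfDegree d)
    (hconn : G.Connected) (hacyc : G.IsAcyclic) (f : V →₀ ℝ) :
    ∑' v : V, (∑ w ∈ G.neighborFinset v, f w) ^ 2
      ≤ (2 * Real.sqrt ((d : ℝ) - 1)) ^ 2 * ∑ v ∈ f.support, (f v) ^ 2 :=
  stmt1_general G d hd hreg hconn hacyc f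
end

section
/- For even k and 0 < i ≤ k, the number N_{k,i} of words of length k over a free generating set and its inverses that reduce to a given fixed irreducible word of length i satisfies N_{k,i} ≤ (2√(d-1))^k (d-1)^{-i/2} √((d-1)/d), and N_{k,0} ≤ (2√(d-1))^k, where d is the alphabet size (number of generators and their inverses). -/
/-!
Read a word `a :: w` from the left: it reduces to `x` exactly when `w` reduces to `a⁻¹x`, and
`|a⁻¹x| = |x| - 1` if `a` is the first letter of the reduced word of `x`, `|x| + 1` otherwise.
So among the `d` first letters one shortens the target and `d - 1` lengthen it (all `d` lengthen
it when `x = 1`), and induction on `k` together with Pascal's rule gives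
`N_{k,i} ≤ C(k, n) (d - 1)^n` whenever `k = i + 2n` (and `N_{k,i} = 0` for other `k`).
Since `(2√(d-1))^k (d-1)^{-i/2} = 2^k (d-1)^n`, the stated bounds follow from `C(k, n) ≤ 2^k`,
and for `i > 0` from `2 C(k, n) ≤ 2^k` together with `√((d-1)/d) ≥ 1/2`.
-/

theorem two_mul_choose_le_two_pow {k : ℕ} (hk : 0 < k) (n : ℕ) : 2 * k.choose n ≤ 2 ^ k := by
  obtain ⟨j, rfl⟩ := Nat.exists_eq_add_of_lt hk
  rw [zero_add, pow_succ, mul_comm]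
  exact Nat.mul_le_mul_right 2 (Nat.choose_succ_le_two_pow j n)

theorem two_mul_sqrt_pow_mul_rpow {D : ℝ} (hD : 0 < D) (i n : ℕ) :
    (2 * √D) ^ (i + 2 * n) * D ^ (-(i : ℝ) / 2) = 2 ^ (i + 2 * n) * D ^ n := by
  have hcancel : √D ^ i * D ^ (-(i : ℝ) / 2) = 1 := by
    rw [Real.sqrt_eq_rpow, ← Real.rpow_natCast, ← Real.rpow_mul hD.le, ← Real.rpow_add hD]
    ring_nf
    exact Real.rpow_zero D
  calc (2 * √D) ^ (i + 2 * n) * D ^ (-(i : ℝ) / 2)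
      = 2 ^ (i + 2 * n) * (√D ^ i * D ^ (-(i : ℝ) / 2)) * (√D ^ 2) ^ n := by ring
    _ = 2 ^ (i + 2 * n) * D ^ n := by rw [hcancel, Real.sq_sqrt hD.le, mul_one]

theorem one_half_le_sqrt_sub_one_div {d : ℝ} (hd : 2 ≤ d) : 1 / 2 ≤ √((d - 1) / d) := by
  rw [Real.le_sqrt (by norm_num) (div_nonneg (by linarith) (by linarith)),
    le_div_iff₀ (by linarith)]
  linarith

namespace FreeGroup

variable {α : Type*}

theorem mk_cons (a : α × Bool) (t : List (α × Bool)) : mk (a :: t) = mk [a] * mk t := by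
  rw [mul_mk, List.singleton_append]

abbrev wordsReducingTo (k : ℕ) (x : FreeGroup α) : Type _ :=
  {w : List (α × Bool) // w.length = k ∧ mk w = x}

def wordsReducingToSuccEquiv (k : ℕ) (x : FreeGroup α) :
    wordsReducingTo (k + 1) x ≃ Σ a : α × Bool, wordsReducingTo k ((mk [a])⁻¹ * x) where
  toFun w := ⟨w.1.head (List.ne_nil_of_length_eq_add_one w.2.1), w.1.tail,
    by simp [w.2.1], by rw [eq_inv_mul_iff_mul_eq, ← mk_cons, List.cons_head_tail, w.2.2]⟩
  invFun p := ⟨p.1 :: p.2.1, by simp [p.2.2.1], by rw [mk_cons, p.2.2.2, mul_inv_cancel_left]⟩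
  left_inv w := Subtype.ext (List.cons_head_tail _)
  right_inv _ := rfl

instance [Fintype α] (k : ℕ) (x : FreeGroup α) : Finite (wordsReducingTo k x) :=
  Finite.of_injective (β := List.Vector (α × Bool) k) (fun w => ⟨w.1, w.2.1⟩)
    fun _ _ h => Subtype.ext (congrArg Subtype.val h :)

theorem card_wordsReducingTo_zero_le_one [Fintype α] (x : FreeGroup α) :
    Nat.card (wordsReducingTo 0 x) ≤ 1 :=
  Finite.card_le_one_iff_subsingleton.mpr ⟨fun v w => Subtype.ext <| by
    rw [List.length_eq_zero_iff.mp v.2.1, List.length_eq_zero_iff.mp w.2.1]⟩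

theorem card_wordsReducingTo_succ [Fintype α] (k : ℕ) (x : FreeGroup α) :
    Nat.card (wordsReducingTo (k + 1) x) =
      ∑ a : α × Bool, Nat.card (wordsReducingTo k ((mk [a])⁻¹ * x)) := by
  rw [Nat.card_congr (wordsReducingToSuccEquiv k x), Nat.card_sigma]

variable [DecidableEq α]

theorem toWord_inv_mk_singleton_mul (a : α × Bool) (x : FreeGroup α) :
    ((mk [a])⁻¹ * x).toWord = reduce ((a.1, !a.2) :: x.toWord) := by
  rw [inv_mk, ← mk_toWord (x := x), mul_mk, toWord_mk]
  simp [invRev]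

theorem norm_inv_mk_singleton_mul_add_one {a : α × Bool} {x : FreeGroup α}
    (h : x.toWord.head? = some a) : ((mk [a])⁻¹ * x).norm + 1 = x.norm := by
  obtain ⟨t, ht⟩ := List.head?_eq_some_iff.mp h
  rw [norm, toWord_inv_mk_singleton_mul, reduce.cons, reduce_toWord, ht, norm, ht]
  simp

theorem norm_inv_mk_singleton_mul {a : α × Bool} {x : FreeGroup α}
    (h : x.toWord.head? ≠ some a) : ((mk [a])⁻¹ * x).norm = x.norm + 1 := by
  rw [norm, toWord_inv_mk_singleton_mul, reduce.cons, reduce_toWord, norm]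
  cases ht : x.toWord with
  | nil => rfl
  | cons b t =>
    have hab : a ≠ b := fun e => h (by simp [ht, e])
    simp [← Prod.ext_iff, hab]

theorem exists_eq_norm_add_two_mul_of_nonempty {k : ℕ} {x : FreeGroup α}
    (h : Nonempty (wordsReducingTo k x)) : ∃ n, k = x.norm + 2 * n := by
  obtain ⟨w, rfl, rfl⟩ := h
  exact reduce.red.length

theorem card_wordsReducingTo_eq_zero_of_lt {k : ℕ} {x : FreeGroup α} (h : k < x.norm) :
    Nat.card (wordsReducingTo k x) = 0 := by
  refine Nat.card_eq_zero.mpr (Or.inl ⟨fun ⟨w, hw, hwx⟩ => ?_⟩)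
  have := hwx ▸ norm_mk_le (L₁ := w)
  omega

variable [Fintype α]

theorem card_wordsReducingTo_le {k n : ℕ} {x : FreeGroup α} (hk : k = x.norm + 2 * n) :
    Nat.card (wordsReducingTo k x) ≤ k.choose n * (2 * Fintype.card α - 1) ^ n := by
  set D := 2 * Fintype.card α - 1
  induction k generalizing x n with
  | zero =>
    obtain rfl : n = 0 := by omega
    simpa using card_wordsReducingTo_zero_le_one x
  | succ k ih =>
    rw [card_wordsReducingTo_succ]
    cases hx : x.toWord with
    | nil =>
      have hx0 : x.norm = 0 := by simp [norm, hx]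
      obtain ⟨n, rfl⟩ : ∃ n', n = n' + 1 := ⟨n - 1, by omega⟩
      have hk' : k = 2 * n + 1 := by omega
      calc ∑ a : α × Bool, Nat.card (wordsReducingTo k ((mk [a])⁻¹ * x))
          ≤ ∑ _a : α × Bool, k.choose n * D ^ n := Finset.sum_le_sum fun a _ =>
            ih (by rw [norm_inv_mk_singleton_mul (by simp [hx])]; omega)
        _ = 2 * Fintype.card α * (k.choose n * D ^ n) := by simp [mul_comm]
        _ ≤ 2 * D * (k.choose n * D ^ n) := by gcongr; omega
        _ = (k + 1).choose (n + 1) * D ^ (n + 1) := by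
          rw [hk', Nat.choose_succ_succ', Nat.choose_symm_half]; ring
    | cons c t =>
      have hc : x.toWord.head? = some c := by simp [hx]
      rw [← Finset.add_sum_erase _ _ (Finset.mem_univ c)]
      have hcancel := ih (n := n) (x := (mk [c])⁻¹ * x)
        (by have := norm_inv_mk_singleton_mul_add_one hc; omega)
      have hpush (a) (ha : a ∈ Finset.univ.erase c) := norm_inv_mk_singleton_mul (a := a) (x := x)
        (by rw [hc]; simpa [eq_comm] using ha)
      cases n with
      | zero =>
        have hzero : ∀ a ∈ Finset.univ.erase c, Nat.card (wordsReducingTo k ((mk [a])⁻¹ * x)) = 0 :=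
          fun a ha => card_wordsReducingTo_eq_zero_of_lt (by rw [hpush a ha]; omega)
        rw [Finset.sum_eq_zero hzero, add_zero]
        simpa using hcancel
      | succ n =>
        have hsum : ∑ a ∈ Finset.univ.erase c, Nat.card (wordsReducingTo k ((mk [a])⁻¹ * x))
            ≤ D * (k.choose n * D ^ n) := by
          refine (Finset.sum_le_card_nsmul _ _ _ fun a ha =>
            ih (n := n) (by rw [hpush a ha]; omega)).trans_eq ?_
          simp [D, mul_comm]
        calc _ ≤ k.choose (n + 1) * D ^ (n + 1) + D * (k.choose n * D ^ n) :=
              add_le_add hcancel hsum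
          _ = (k + 1).choose (n + 1) * D ^ (n + 1) := by rw [Nat.choose_succ_succ']; ring

theorem card_wordsReducingTo_le_rpow_of_choose_le [Nonempty α] {c : ℕ} {x : FreeGroup α}
    (hc : ∀ n, c * (x.norm + 2 * n).choose n ≤ 2 ^ (x.norm + 2 * n)) (k : ℕ) :
    c * (Nat.card (wordsReducingTo k x) : ℝ) ≤
      (2 * √(2 * Fintype.card α - 1)) ^ k * (2 * Fintype.card α - 1 : ℝ) ^ (-(x.norm : ℝ) / 2) := by
  have hα : 1 ≤ Fintype.card α := Fintype.card_pos
  set D : ℝ := 2 * Fintype.card α - 1 with hD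
  have hD0 : 0 < D := by rw [hD]; linarith [(Nat.one_le_cast.mpr hα : (1 : ℝ) ≤ _)]
  rcases isEmpty_or_nonempty (wordsReducingTo k x) with h | h
  · rw [Nat.card_of_isEmpty, Nat.cast_zero, mul_zero]
    positivity
  obtain ⟨n, rfl⟩ := exists_eq_norm_add_two_mul_of_nonempty h
  have hcard : (Nat.card (wordsReducingTo (x.norm + 2 * n) x) : ℝ) ≤
      (x.norm + 2 * n).choose n * D ^ n := by
    have hcast : ((2 * Fintype.card α - 1 : ℕ) : ℝ) = D := by
      rw [Nat.cast_sub (by omega)]; push_cast; rfl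
    rw [← hcast]
    exact_mod_cast card_wordsReducingTo_le rfl
  calc c * (Nat.card (wordsReducingTo (x.norm + 2 * n) x) : ℝ)
      ≤ c * ((x.norm + 2 * n).choose n * D ^ n) := by gcongr
    _ ≤ 2 ^ (x.norm + 2 * n) * D ^ n := by rw [← mul_assoc]; gcongr; exact_mod_cast hc n
    _ = _ := (two_mul_sqrt_pow_mul_rpow hD0 _ _).symm

end FreeGroup

theorem stmt2_general (m : ℕ) (hm : 1 ≤ m) (d : ℕ) (hd : d = 2 * m) (k i : ℕ)
    (x : FreeGroup (Fin m)) (hx : x.toWord.length = i) :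
    (0 < i →
      (Nat.card {w : List (Fin m × Bool) // w.length = k ∧ FreeGroup.mk w = x} : ℝ)
        ≤ (2 * Real.sqrt ((d : ℝ) - 1)) ^ k * ((d : ℝ) - 1) ^ (-(i : ℝ) / 2)
            * Real.sqrt (((d : ℝ) - 1) / d)) ∧
    (i = 0 →
      (Nat.card {w : List (Fin m × Bool) // w.length = k ∧ FreeGroup.mk w = x} : ℝ)
        ≤ (2 * Real.sqrt ((d : ℝ) - 1)) ^ k) := by
  have : Nonempty (Fin m) := ⟨⟨0, hm⟩⟩
  have hd2 : (2 : ℝ) ≤ 2 * Fintype.card (Fin m) := by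
    rw [Fintype.card_fin]; linarith [(Nat.one_le_cast.mpr hm : (1 : ℝ) ≤ m)]
  subst hx
  rw [show (d : ℝ) = 2 * Fintype.card (Fin m) by simp [hd]]
  refine ⟨fun hi => ?_, fun hi => ?_⟩
  · have hN := FreeGroup.card_wordsReducingTo_le_rpow_of_choose_le (x := x)
      (fun n => two_mul_choose_le_two_pow (Nat.add_pos_left hi _) n) k
    rw [Nat.cast_ofNat, show x.norm = x.toWord.length from rfl] at hN
    refine le_trans ?_ (mul_le_mul_of_nonneg_left (one_half_le_sqrt_sub_one_div hd2)
      (mul_nonneg (by positivity) (Real.rpow_nonneg (by linarith) _)))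
    rw [mul_one_div]
    linarith
  · simpa [FreeGroup.norm, hi] using FreeGroup.card_wordsReducingTo_le_rpow_of_choose_le (c := 1)
      (x := x) (fun n => by simpa using Nat.choose_le_two_pow _ n) k

/-- Let `d = 2m` be the size of the alphabet
`Π = {π₁, π₁⁻¹, …, π_m, π_m⁻¹}` (encoded as `Fin m × Bool`).  For even `k` and a fixed
irreducible (reduced) word `x` of length `i` with `0 < i ≤ k`, the number `N_{k,i}` of words of
length `k` over `Π` that reduce to `x` satisfies
`N_{k,i} ≤ (2√(d-1))^k (d-1)^{-i/2} √((d-1)/d)`;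
and for `i = 0` (i.e. `x = 1`), `N_{k,0} ≤ (2√(d-1))^k`. -/
theorem stmt2 (m : ℕ) (hm : 1 ≤ m) (d : ℕ) (hd : d = 2 * m) (k i : ℕ)
    (hk : Even k) (hik : i ≤ k)
    (x : FreeGroup (Fin m)) (hx : x.toWord.length = i) :
    (0 < i →
      (Nat.card {w : List (Fin m × Bool) // w.length = k ∧ FreeGroup.mk w = x} : ℝ)
        ≤ (2 * Real.sqrt ((d : ℝ) - 1)) ^ k * ((d : ℝ) - 1) ^ (-(i : ℝ) / 2)
            * Real.sqrt (((d : ℝ) - 1) / d)) ∧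
    (i = 0 →
      (Nat.card {w : List (Fin m × Bool) // w.length = k ∧ FreeGroup.mk w = x} : ℝ)
        ≤ (2 * Real.sqrt ((d : ℝ) - 1)) ^ k) :=
  stmt2_general m hm d hd k i x hx
end

section
/- Define polynomials q_k by q₁(x) = x, q₂(x) = x² − d, and q_k(x) = x·q_{k−1}(x) − (d−1)·q_{k−2}(x) for k ≥ 3. Then q_k(2√(d−1)·cos θ) = (√(d−1))^k · ( (2/(d−1)) cos kθ + ((d−2)/(d−1)) · sin((k+1)θ)/sin θ ). -/
/-!
Writing `x = 2 s y` with `s² = d − 1`, the recurrence of `q_k` becomes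
`q_{k+2} = 2 s y q_{k+1} − s² q_k`, which is also satisfied by `s^k T_k(y)` and `s^k U_k(y)` for the
Chebyshev polynomials `T`, `U`. Matching `q₁` and `q₂` fixes the combination
`q_k(2 s y) = s^k ((2/s²) T_k(y) + ((s² − 1)/s²) U_k(y))`, and at `y = cos θ` one has
`T_k(cos θ) = cos kθ` and `U_k(cos θ) = sin((k+1)θ) / sin θ`.
-/

/-- The irreducible-trace polynomials: `q₁(x) = x`, `q₂(x) = x² − d`, and
`q_k(x) = x q_{k−1}(x) − (d−1) q_{k−2}(x)` for `k ≥ 3`.  (The value at `k = 0` is irrelevant.) -/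
noncomputable def qPoly (d : ℝ) : ℕ → ℝ → ℝ
  | 0 => fun _ => 0
  | 1 => fun x => x
  | 2 => fun x => x ^ 2 - d
  | n + 3 => fun x => x * qPoly d (n + 2) x - (d - 1) * qPoly d (n + 1) x

open Polynomial Polynomial.Chebyshev

theorem qPoly_eq_of_recurrence {d x : ℝ} {f : ℕ → ℝ} (h₁ : f 1 = x) (h₂ : f 2 = x ^ 2 - d)
    (hrec : ∀ n, f (n + 3) = x * f (n + 2) - (d - 1) * f (n + 1)) :
    ∀ k, qPoly d (k + 1) x = f (k + 1)
  | 0 => h₁.symm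
  | 1 => h₂.symm
  | n + 2 => by
    rw [hrec, ← qPoly_eq_of_recurrence h₁ h₂ hrec n,
      ← qPoly_eq_of_recurrence h₁ h₂ hrec (n + 1), qPoly]

section ScaledChebyshev

variable {R : Type*} [CommRing R]

noncomputable def scaledChebyshev (α β s y : R) (n : ℕ) : R :=
  s ^ n * (α * (T R n).eval y + β * (U R n).eval y)

theorem scaledChebyshev_add_two (α β s y : R) (n : ℕ) :
    scaledChebyshev α β s y (n + 2) =
      2 * s * y * scaledChebyshev α β s y (n + 1) - s ^ 2 * scaledChebyshev α β s y n := by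
  simp only [scaledChebyshev, Nat.cast_add, Nat.cast_ofNat, Nat.cast_one, T_add_two, U_add_two,
    eval_sub, eval_mul, eval_X, eval_ofNat]
  ring

end ScaledChebyshev

theorem qPoly_two_mul_mul_eq_scaledChebyshev {d s : ℝ} (hs : s ^ 2 = d - 1) (hs₀ : s ≠ 0)
    (y : ℝ) (k : ℕ) :
    qPoly d (k + 1) (2 * s * y) =
      scaledChebyshev (2 / (d - 1)) ((d - 2) / (d - 1)) s y (k + 1) := by
  have hd : d = s ^ 2 + 1 := by linarith
  subst hd
  apply qPoly_eq_of_recurrence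
  · simp only [scaledChebyshev, pow_one, Nat.cast_one, T_one, U_one, eval_X, eval_mul, eval_ofNat]
    field_simp
    ring
  · simp only [scaledChebyshev, Nat.cast_ofNat, T_two, U_two, eval_sub, eval_mul, eval_ofNat,
      eval_pow, eval_X, eval_one]
    field_simp
    ring
  · intro n
    rw [scaledChebyshev_add_two]
    ring

theorem U_real_cos_eq_div {θ : ℝ} (hθ : Real.sin θ ≠ 0) (n : ℤ) :
    (U ℝ n).eval (Real.cos θ) = Real.sin ((n + 1) * θ) / Real.sin θ :=
  eq_div_of_mul_eq hθ (U_real_cos θ n)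

/-- `q_k(2√(d−1) cos θ) = (√(d−1))^k ((2/(d−1)) cos kθ + ((d−2)/(d−1)) sin((k+1)θ)/sin θ)`. -/
theorem stmt3 (d : ℕ) (hd : 3 ≤ d) (k : ℕ) (hk : 1 ≤ k) (θ : ℝ) (hθ : Real.sin θ ≠ 0) :
    qPoly (d : ℝ) k (2 * Real.sqrt ((d : ℝ) - 1) * Real.cos θ)
      = (Real.sqrt ((d : ℝ) - 1)) ^ k *
          ((2 / ((d : ℝ) - 1)) * Real.cos (k * θ)
            + (((d : ℝ) - 2) / ((d : ℝ) - 1)) * Real.sin ((k + 1) * θ) / Real.sin θ) := by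
  obtain ⟨k, rfl⟩ := Nat.exists_eq_add_of_le' hk
  have hd₁ : (0 : ℝ) < d - 1 := by
    have : (3 : ℝ) ≤ d := by exact_mod_cast hd
    linarith
  rw [qPoly_two_mul_mul_eq_scaledChebyshev (Real.sq_sqrt hd₁.le) (Real.sqrt_ne_zero'.mpr hd₁),
    scaledChebyshev, T_real_cos, U_real_cos_eq_div hθ, mul_div_assoc]
  norm_cast
end

section
/- A graph H with no leaves (completely pruned) has the property that every edge of H lies on an irreducible (non-backtracking) cycle; conversely, if every edge of H lies on an irreducible cycle, then H has no leaves. -/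
/-!
A dart `d'` is a non-backtracking successor of a dart `d` if it starts where `d` ends and is not
the reversal of `d`; irreducible cycles are exactly the closed walks whose darts, read cyclically,
are each a non-backtracking successor of the previous one. A dart has a non-backtracking successor
iff its head has degree at least 2, which gives the converse direction.

For the forward direction every dart has a successor. Following successors from a dart `d` of the
finite graph eventually runs into a cycle; at the dart `x` through which the walk first enters it,
the last dart of the cycle and `x` end at the same vertex, so one can turn around into `x.symm` and
retrace the walk backwards to `d.symm`. Doing the same from `d.symm` and reversing walks shows that
`d` returns to itself, i.e. lies on an irreducible cycle.
-/

/-- An irreducible (non-backtracking) cycle: a nonempty closed walk in which no step is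
immediately followed by its reverse, and the last step is not the reverse of the first. -/
def IsIrredCycle {V : Type*} {G : SimpleGraph V} {v : V} (w : G.Walk v v) : Prop :=
  1 ≤ w.length ∧
  List.Chain' (fun d₁ d₂ : G.Dart => d₂ ≠ d₁.symm) w.darts ∧
  ∀ d₁ ∈ w.darts.head?, ∀ d₂ ∈ w.darts.getLast?, d₁ ≠ d₂.symm

namespace List

variable {α : Type*} {R S : α → α → Prop}

theorem IsChain.and : ∀ {l : List α}, IsChain R l → IsChain S l →
    IsChain (fun a b => R a b ∧ S a b) l
  | [], _, _ => .nil
  | [_], _, _ => .singleton _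
  | _ :: _ :: _, .cons_cons hR hl, .cons_cons hS hl' => .cons_cons ⟨hR, hS⟩ (hl.and hl')

theorem IsChain.exists_rel_right {b : α} :
    ∀ {l : List α}, IsChain R (l ++ [b]) → ∀ a ∈ l, ∃ c ∈ l ++ [b], R a c
  | [], _, _, ha => absurd ha not_mem_nil
  | x :: t, h, a, ha => by
    rw [cons_append, List.isChain_cons] at h
    rcases mem_cons.mp ha with rfl | ha
    · have hne : t ++ [b] ≠ [] := by simp
      exact ⟨_, mem_cons_of_mem _ (head_mem hne), h.1 _ (head?_eq_some_head hne)⟩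
    · obtain ⟨c, hc, hac⟩ := h.2.exists_rel_right a ha
      exact ⟨c, mem_cons_of_mem _ hc, hac⟩

theorem IsChain.exists_rel_left {a : α} {l : List α} (h : IsChain R (a :: l)) :
    ∀ c ∈ l, ∃ b ∈ a :: l, R b c := by
  rw [← reverse_reverse (a :: l), isChain_reverse, reverse_cons] at h
  intro c hc
  obtain ⟨b, hb, hcb⟩ := h.exists_rel_right c (mem_reverse.mpr hc)
  exact ⟨b, by simpa [or_comm] using hb, hcb⟩

end List

namespace Relation

variable {α : Type*} {r : α → α → Prop}

theorem ReflTransGen.exists_rel_not_of {P : α → Prop} {a b : α} (hab : ReflTransGen r a b)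
    (ha : ¬P a) (hb : P b) :
    ∃ x y, ReflTransGen r a x ∧ r x y ∧ ¬P x ∧ P y ∧ ReflTransGen r y b := by
  induction hab with
  | refl => exact absurd hb ha
  | @tail c b hac hcb ih =>
    by_cases hc : P c
    · obtain ⟨x, y, hax, hxy, hx, hy, hyc⟩ := ih hc
      exact ⟨x, y, hax, hxy, hx, hy, hyc.tail hcb⟩
    · exact ⟨c, b, hac, hcb, hc, hb, .refl⟩

theorem exists_reflTransGen_transGen_self [Finite α] (h : ∀ a, ∃ b, r a b) (a : α) :
    ∃ c, ReflTransGen r a c ∧ TransGen r c c := by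
  choose f hf using h
  have hiter : ∀ n x, TransGen r x (f^[n + 1] x) := by
    intro n
    induction n with
    | zero => exact fun x => .single (hf x)
    | succ n ih => exact fun x => (Function.iterate_succ_apply' f _ x) ▸ (ih x).tail (hf _)
  obtain ⟨m, n, hmn, heq⟩ : ∃ m n, m < n ∧ f^[m] a = f^[n] a := by
    obtain ⟨m, n, hne, heq⟩ := Finite.exists_ne_map_eq_of_infinite (f^[·] a)
    rcases hne.lt_or_gt with hlt | hlt
    exacts [⟨m, n, hlt, heq⟩, ⟨n, m, hlt, heq.symm⟩]
  refine ⟨f^[m] a, ?_, ?_⟩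
  · cases m with
    | zero => exact .refl
    | succ m => exact (hiter m a).to_reflTransGen
  · obtain ⟨k, rfl⟩ := Nat.exists_eq_add_of_lt hmn
    have := hiter k (f^[m] a)
    rwa [← Function.iterate_add_apply, show k + 1 + m = m + k + 1 by ring, ← heq] at this

end Relation

namespace SimpleGraph

open Relation

variable {V : Type*} {G : SimpleGraph V}

theorem Walk.fst_eq_of_mem_head?_darts {u v : V} (p : G.Walk u v) {d : G.Dart}
    (hd : d ∈ p.darts.head?) : d.fst = u := by
  have hne : p.darts ≠ [] := List.ne_nil_of_mem (List.mem_of_mem_head? hd)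
  rw [List.head?_eq_some_head hne, Option.mem_def, Option.some_inj,
    p.head_darts_eq_firstDart] at hd
  rw [← hd]
  rfl

theorem Walk.snd_eq_of_mem_getLast?_darts {u v : V} (p : G.Walk u v) {d : G.Dart}
    (hd : d ∈ p.darts.getLast?) : d.snd = v := by
  obtain ⟨hne, rfl⟩ := List.mem_getLast?_eq_getLast hd
  rw [p.getLast_darts_eq_lastDart]
  rfl

def NonBacktrackingAdj (G : SimpleGraph V) (d d' : G.Dart) : Prop :=
  G.DartAdj d d' ∧ d' ≠ d.symm

theorem NonBacktrackingAdj.symm {d d' : G.Dart} (h : G.NonBacktrackingAdj d d') :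
    G.NonBacktrackingAdj d'.symm d.symm :=
  ⟨h.1.symm, fun hd => h.2 (by rw [Dart.symm_symm] at hd; exact hd.symm)⟩

theorem nonBacktrackingAdj_symm_of_ne {a b c : G.Dart} (ha : G.NonBacktrackingAdj a c)
    (hb : G.NonBacktrackingAdj b c) (hab : a ≠ b) : G.NonBacktrackingAdj b a.symm :=
  ⟨hb.1.trans ha.1.symm, fun h => hab (Dart.symm_involutive.injective h)⟩

theorem exists_nonBacktrackingAdj_iff [G.LocallyFinite] {d : G.Dart} :
    (∃ d', G.NonBacktrackingAdj d d') ↔ 1 < G.degree d.snd := by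
  rw [← card_neighborFinset_eq_degree, Finset.one_lt_card]
  constructor
  · rintro ⟨d', hadj, hne⟩
    refine ⟨d.fst, (G.mem_neighborFinset _ _).2 d.adj.symm, d'.snd, ?_, fun h => hne ?_⟩
    · rw [mem_neighborFinset, hadj]; exact d'.adj
    · exact Dart.ext _ _ (Prod.ext hadj.symm h.symm)
  · rintro ⟨x, hx, y, hy, hxy⟩
    obtain ⟨z, hz, hzd⟩ : ∃ z ∈ G.neighborFinset d.snd, z ≠ d.fst := by
      by_cases hx' : x = d.fst
      exacts [⟨y, hy, hx' ▸ hxy.symm⟩, ⟨x, hx, hx'⟩]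
    exact ⟨⟨(d.snd, z), (G.mem_neighborFinset _ _).1 hz⟩, rfl,
      fun h => hzd (congrArg (·.snd) h)⟩

theorem transGen_nonBacktrackingAdj_symm {d d' : G.Dart}
    (h : TransGen G.NonBacktrackingAdj d d') :
    TransGen G.NonBacktrackingAdj d'.symm d.symm :=
  TransGen.lift Dart.symm (fun _ _ h => h.symm) _ _ (TransGen.swap _ _ h)

theorem reflTransGen_nonBacktrackingAdj_symm {d d' : G.Dart}
    (h : ReflTransGen G.NonBacktrackingAdj d d') :
    ReflTransGen G.NonBacktrackingAdj d'.symm d.symm :=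
  ReflTransGen.lift Dart.symm (fun _ _ h => h.symm) _ _ (ReflTransGen.swap _ _ h)

theorem transGen_nonBacktrackingAdj_self_or_symm [Finite G.Dart]
    (h : ∀ d : G.Dart, ∃ d', G.NonBacktrackingAdj d d') (d : G.Dart) :
    TransGen G.NonBacktrackingAdj d d ∨ TransGen G.NonBacktrackingAdj d d.symm := by
  by_cases hd : TransGen G.NonBacktrackingAdj d d
  · exact .inl hd
  right
  -- `c` lies on a cycle reachable from `d`; `x → y` is where the walk enters it, `y' → y` is the
  -- cycle's own step into `y`.
  obtain ⟨c, hdc, hc⟩ := exists_reflTransGen_transGen_self h d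
  obtain ⟨x, y, hdx, hxy, hcx, hcy, hyc⟩ :=
    hdc.exists_rel_not_of (P := ReflTransGen G.NonBacktrackingAdj c)
      (fun hcd => hd ((TransGen.trans_right hdc hc).trans_left hcd)) .refl
  obtain ⟨y', hyy', hy'y⟩ := TransGen.tail'_iff.mp ((TransGen.trans_right hyc hc).trans_left hcy)
  have hturn : G.NonBacktrackingAdj y' x.symm :=
    nonBacktrackingAdj_symm_of_ne hxy hy'y fun hxy' => hcx (hxy' ▸ hcy.trans hyy')
  exact (TransGen.tail' (hdc.trans (hcy.trans hyy')) hturn).trans_left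
    (reflTransGen_nonBacktrackingAdj_symm hdx)

theorem transGen_nonBacktrackingAdj_self [Finite G.Dart]
    (h : ∀ d : G.Dart, ∃ d', G.NonBacktrackingAdj d d') (d : G.Dart) :
    TransGen G.NonBacktrackingAdj d d := by
  rcases transGen_nonBacktrackingAdj_self_or_symm h d with hd | hd
  · exact hd
  rcases transGen_nonBacktrackingAdj_self_or_symm h d.symm with hd' | hd'
  · simpa using transGen_nonBacktrackingAdj_symm hd'
  · simpa using hd.trans hd'

theorem exists_walk_of_transGen_nonBacktrackingAdj {d e : G.Dart}
    (h : TransGen G.NonBacktrackingAdj d e) :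
    ∃ w : G.Walk d.fst e.fst, d ∈ w.darts.head? ∧
      List.IsChain G.NonBacktrackingAdj (w.darts ++ [e]) := by
  induction h using TransGen.head_induction_on with
  | @single d hde =>
    have hadj : d.snd = e.fst := hde.1
    refine ⟨(Walk.cons d.adj .nil).copy rfl hadj, ?_⟩
    simp only [Walk.darts_copy, Walk.darts_cons, Walk.darts_nil]
    exact ⟨rfl, List.isChain_pair.mpr hde⟩
  | @head d d' hdd' _ ih =>
    obtain ⟨w, hw, hchain⟩ := ih
    have hadj : d'.fst = d.snd := hdd'.1.symm
    refine ⟨.cons d.adj (w.copy hadj rfl), ?_⟩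
    simp only [Walk.darts_cons, Walk.darts_copy, List.cons_append, List.isChain_cons]
    refine ⟨rfl, fun y hy => ?_, hchain⟩
    rw [List.head?_append, Option.mem_def.mp hw] at hy
    exact Option.some_inj.mp hy ▸ hdd'

end SimpleGraph

open SimpleGraph

theorem isIrredCycle_iff {V : Type*} {G : SimpleGraph V} {v : V} {w : G.Walk v v} :
    IsIrredCycle w ↔
      ∃ d ∈ w.darts.head?, List.IsChain G.NonBacktrackingAdj (w.darts ++ [d]) := by
  constructor
  · rintro ⟨hlen, hchain, hwrap⟩
    obtain ⟨d, hd⟩ : ∃ d, d ∈ w.darts.head? := by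
      refine Option.ne_none_iff_exists'.mp fun h => ?_
      rw [List.head?_eq_none_iff, ← List.length_eq_zero_iff, w.length_darts] at h
      omega
    refine ⟨d, hd, List.isChain_append.mpr
      ⟨w.isChain_dartAdj_darts.and hchain, .singleton _, fun x hx y hy => ?_⟩⟩
    obtain rfl : y = d := (Option.some_inj.mp hy).symm
    exact ⟨(w.snd_eq_of_mem_getLast?_darts hx).trans (w.fst_eq_of_mem_head?_darts hd).symm,
      hwrap y hd x hx⟩
  · rintro ⟨d, hd, hchain⟩
    obtain ⟨t, ht⟩ := List.head?_eq_some_iff.mp hd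
    refine ⟨?_, hchain.left_of_append.imp fun _ _ h => h.2, fun d₁ h₁ d₂ h₂ => ?_⟩
    · rw [← w.length_darts, ht]
      simp
    · obtain rfl : d₁ = d := Option.some_inj.mp (h₁.symm.trans hd)
      exact ((List.isChain_append.mp hchain).2.2 d₂ h₂ d₁ rfl).2

namespace IsIrredCycle

variable {V : Type*} {G : SimpleGraph V} {v : V} {w : G.Walk v v}

theorem exists_nonBacktrackingAdj_right (hw : IsIrredCycle w) {d : G.Dart} (hd : d ∈ w.darts) :
    ∃ d' ∈ w.darts, G.NonBacktrackingAdj d d' := by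
  obtain ⟨d₀, hd₀, hchain⟩ := isIrredCycle_iff.mp hw
  obtain ⟨d', hd', hdd'⟩ := hchain.exists_rel_right d hd
  refine ⟨d', ?_, hdd'⟩
  rcases List.mem_append.mp hd' with h | h
  · exact h
  · exact List.eq_of_mem_singleton h ▸ List.mem_of_mem_head? hd₀

theorem exists_nonBacktrackingAdj_left (hw : IsIrredCycle w) {d : G.Dart} (hd : d ∈ w.darts) :
    ∃ d' ∈ w.darts, G.NonBacktrackingAdj d' d := by
  obtain ⟨d₀, hd₀, hchain⟩ := isIrredCycle_iff.mp hw
  obtain ⟨t, ht⟩ := List.head?_eq_some_iff.mp hd₀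
  rw [ht, List.cons_append] at hchain
  rw [ht] at hd ⊢
  obtain ⟨d', hd', hd'd⟩ := hchain.exists_rel_left d (by simp_all [or_comm])
  exact ⟨d', by simp_all [or_comm], hd'd⟩

theorem one_lt_degree [G.LocallyFinite] (hw : IsIrredCycle w) {e : Sym2 V} (he : e ∈ w.edges)
    {x : V} (hx : x ∈ e) : 1 < G.degree x := by
  obtain ⟨d, hd, rfl⟩ := List.mem_map.mp he
  rcases Sym2.mem_iff.mp hx with rfl | rfl
  · obtain ⟨d', -, hd'd⟩ := hw.exists_nonBacktrackingAdj_left hd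
    exact hd'd.1 ▸ exists_nonBacktrackingAdj_iff.mp ⟨d, hd'd⟩
  · obtain ⟨d', -, hdd'⟩ := hw.exists_nonBacktrackingAdj_right hd
    exact exists_nonBacktrackingAdj_iff.mp ⟨d', hdd'⟩

end IsIrredCycle

theorem SimpleGraph.exists_isIrredCycle_mem_darts {V : Type*} {G : SimpleGraph V} [Finite G.Dart]
    (h : ∀ d : G.Dart, ∃ d', G.NonBacktrackingAdj d d') (d : G.Dart) :
    ∃ w : G.Walk d.fst d.fst, IsIrredCycle w ∧ d ∈ w.darts := by
  obtain ⟨w, hd, hchain⟩ :=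
    exists_walk_of_transGen_nonBacktrackingAdj (transGen_nonBacktrackingAdj_self h d)
  exact ⟨w, isIrredCycle_iff.mpr ⟨d, hd, hchain⟩, List.mem_of_mem_head? hd⟩

theorem stmt7_general {V : Type*} [Fintype V] (G : SimpleGraph V)
    [DecidableRel G.Adj] :
    (∀ v : V, G.degree v ≠ 1) ↔
      ∀ e ∈ G.edgeSet, ∃ (v : V) (w : G.Walk v v), IsIrredCycle w ∧ e ∈ w.edges := by
  constructor
  · intro hdeg e he
    induction e using Sym2.ind with | _ a b => ?_
    have hsucc (d : G.Dart) : ∃ d', G.NonBacktrackingAdj d d' :=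
      exists_nonBacktrackingAdj_iff.mpr <| lt_of_le_of_ne
        ((G.degree_pos_iff_exists_adj _).mpr ⟨_, d.adj.symm⟩) (hdeg _).symm
    obtain ⟨w, hw, hd⟩ := exists_isIrredCycle_mem_darts hsucc ⟨(a, b), he⟩
    exact ⟨a, w, hw, List.mem_map_of_mem hd⟩
  · intro hcyc v hv
    obtain ⟨u, hvu⟩ := (G.degree_pos_iff_exists_adj v).mp (by omega)
    obtain ⟨_, w, hw, he⟩ := hcyc s(v, u) hvu
    exact (hw.one_lt_degree he (Sym2.mem_mk_left v u)).ne' hv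

/-- A finite graph has no leaves (is completely pruned) if and only if each of
its edges lies on an irreducible (non-backtracking) cycle. -/
theorem stmt7 {V : Type*} [Fintype V] [DecidableEq V] (G : SimpleGraph V)
    [DecidableRel G.Adj] :
    (∀ v : V, G.degree v ≠ 1) ↔
      ∀ e ∈ G.edgeSet, ∃ (v : V) (w : G.Walk v v), IsIrredCycle w ∧ e ∈ w.edges :=
  stmt7_general G
end

section
/- If G is a connected d-regular graph with d ≥ 3, then the non-backtracking edge graph G_irred is strongly connected. -/
/-!
Every dart has `d - 1` successors and `d - 1` predecessors in `G_irred`. In a finite digraph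
whose in- and out-degrees agree, reachability is symmetric: a set closed under successors is
entered by exactly as many arcs as leave it, so it is closed under predecessors as well. Hence a
dart `(u, v)` can be reversed: with neighbours `w₁ ≠ w₂` of `v` other than `u` (here `d ≥ 3`),
go to `(v, w₂)`, return to `(w₁, v)`, and step to `(v, u)`. Any two darts are then joined by
following a walk of `G`, reversing wherever the walk backtracks.
-/

/-- The step relation of the non-backtracking edge graph `G_irred`: from dart `d₁` one may move
to dart `d₂` when `d₂` starts where `d₁` ends and `d₂` is not the reverse of `d₁`. -/
def IrredStep {V : Type*} (G : SimpleGraph V) (d₁ d₂ : G.Dart) : Prop :=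
  d₁.toProd.2 = d₂.toProd.1 ∧ d₂ ≠ d₁.symm

open Finset

namespace Relation

variable {α : Type*} [Fintype α] {r : α → α → Prop} [DecidableRel r]

theorem mem_of_rel_of_forwardClosed (hbal : ∀ a, #{b | r a b} = #{b | r b a})
    {S : Finset α} (hS : ∀ a ∈ S, ∀ b, r a b → b ∈ S) {a b : α} (hab : r a b) (hb : b ∈ S) :
    a ∈ S := by
  set leaving := (S ×ˢ univ).filter fun p => r p.1 p.2
  set entering := (univ ×ˢ S).filter fun p => r p.1 p.2
  have hsub : leaving ⊆ entering := by
    intro p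
    simp only [leaving, entering, mem_filter, mem_product, mem_univ, true_and, and_true]
    exact fun ⟨hp, hr⟩ => ⟨hS _ hp _ hr, hr⟩
  have hleaving : #leaving = ∑ x ∈ S, #{y | r x y} := by
    rw [card_filter, sum_product]; simp only [← card_filter]
  have hentering : #entering = ∑ y ∈ S, #{x | r x y} := by
    rw [card_filter, sum_product_right]; simp only [← card_filter]
  have hmem : (a, b) ∈ leaving := by
    rw [eq_of_subset_of_card_le hsub (by simp only [hleaving, hentering, hbal, le_refl])]
    simp [entering, hab, hb]
  exact (mem_product.1 (mem_filter.1 hmem).1).1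

theorem ReflTransGen.symm_of_balanced (hbal : ∀ a, #{b | r a b} = #{b | r b a}) {a b : α}
    (h : ReflTransGen r a b) : ReflTransGen r b a := by
  classical
  induction h with
  | refl => exact .refl
  | @tail c d _ hcd ih =>
    have hdc : ReflTransGen r d c := by
      simpa using mem_of_rel_of_forwardClosed hbal (S := {x | ReflTransGen r d x})
        (fun x hx y hxy => by simp only [mem_filter_univ] at hx ⊢; exact hx.tail hxy) hcd
        ((mem_filter_univ _).2 .refl)
    exact hdc.trans ih

end Relation

namespace SimpleGraph

variable {V : Type*} {G : SimpleGraph V}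

instance [DecidableEq V] : DecidableRel (IrredStep G) :=
  fun _ _ => inferInstanceAs (Decidable (_ ∧ _))

theorem irredStep_iff_symm {g h : G.Dart} : IrredStep G g h ↔ IrredStep G h.symm g.symm := by
  simp only [IrredStep, Dart.symm_toProd, Prod.fst_swap, Prod.snd_swap, Dart.symm_symm, ne_eq]
  exact ⟨fun ⟨h₁, h₂⟩ => ⟨h₁.symm, fun e => h₂ e.symm⟩,
    fun ⟨h₁, h₂⟩ => ⟨h₁.symm, fun e => h₂ e.symm⟩⟩

section Counting

variable [Fintype V] [DecidableRel G.Adj] [DecidableEq V]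

theorem card_irredStep_left (g : G.Dart) : #{h | IrredStep G g h} = G.degree g.snd - 1 := by
  have : ({h | IrredStep G g h} : Finset G.Dart) =
      ({h | h.fst = g.snd} : Finset G.Dart).erase g.symm := by
    ext h
    simp only [mem_filter_univ, mem_erase]
    unfold IrredStep
    exact ⟨fun ⟨h₁, h₂⟩ => ⟨h₂, h₁.symm⟩, fun ⟨h₂, h₁⟩ => ⟨h₁.symm, h₂⟩⟩
  rw [this, card_erase_of_mem (by simp), dart_fst_fiber_card_eq_degree]

theorem card_irredStep_right (h : G.Dart) : #{g | IrredStep G g h} = G.degree h.fst - 1 := by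
  rw [show h.fst = h.symm.snd from rfl, ← card_irredStep_left h.symm]
  refine card_nbij' Dart.symm Dart.symm (fun g hg => ?_) (fun g hg => ?_)
    (fun g _ => g.symm_symm) (fun g _ => g.symm_symm)
  · simp only [coe_filter, mem_univ, true_and, Set.mem_ofPred_eq] at hg ⊢
    exact irredStep_iff_symm.1 hg
  · simp only [coe_filter, mem_univ, true_and, Set.mem_ofPred_eq] at hg ⊢
    rw [irredStep_iff_symm, Dart.symm_symm]; exact hg

end Counting

variable [Fintype V] [DecidableRel G.Adj] {d : ℕ}

theorem reflTransGen_irredStep_symm (hreg : G.IsRegularOfDegree d) {e f : G.Dart}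
    (h : Relation.ReflTransGen (IrredStep G) e f) : Relation.ReflTransGen (IrredStep G) f e := by
  classical
  refine h.symm_of_balanced fun g => ?_
  rw [card_irredStep_left, card_irredStep_right, hreg, hreg]

theorem reflTransGen_irredStep_dart_symm (hd : 3 ≤ d) (hreg : G.IsRegularOfDegree d)
    (e : G.Dart) : Relation.ReflTransGen (IrredStep G) e e.symm := by
  classical
  have hcard : 1 < #((G.neighborFinset e.snd).erase e.fst) := by
    rw [card_erase_of_mem (G.mem_neighborFinset _ _ |>.2 e.adj.symm), card_neighborFinset_eq_degree,
      hreg]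
    omega
  obtain ⟨w₁, hw₁, w₂, hw₂, hne⟩ := one_lt_card.1 hcard
  rw [mem_erase, mem_neighborFinset] at hw₁ hw₂
  let into : G.Dart := ⟨(w₁, e.snd), hw₁.2.symm⟩
  let out : G.Dart := ⟨(e.snd, w₂), hw₂.2⟩
  have h₁ : IrredStep G e out := ⟨rfl, fun h => hw₂.1 (congrArg (·.snd) h)⟩
  have h₂ : IrredStep G into out := ⟨rfl, fun h => hne (congrArg (·.snd) h).symm⟩
  have h₃ : IrredStep G into e.symm := ⟨rfl, fun h => hw₁.1 (congrArg (·.snd) h).symm⟩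
  exact (Relation.ReflTransGen.single h₁).trans <|
    (reflTransGen_irredStep_symm hreg (.single h₂)).tail h₃

theorem reflTransGen_irredStep_of_snd_eq_fst (hd : 3 ≤ d) (hreg : G.IsRegularOfDegree d)
    {e f : G.Dart} (h : e.snd = f.fst) : Relation.ReflTransGen (IrredStep G) e f := by
  by_cases hf : f = e.symm
  · exact hf ▸ reflTransGen_irredStep_dart_symm hd hreg e
  · exact .single ⟨h, hf⟩

theorem reflTransGen_irredStep_of_walk (hd : 3 ≤ d) (hreg : G.IsRegularOfDegree d)
    {a b : V} (p : G.Walk a b) {e f : G.Dart} (he : e.snd = a) (hf : f.fst = b) :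
    Relation.ReflTransGen (IrredStep G) e f := by
  induction p generalizing e with
  | nil => exact reflTransGen_irredStep_of_snd_eq_fst hd hreg (he.trans hf.symm)
  | @cons u v w huv p ih =>
    exact (reflTransGen_irredStep_of_snd_eq_fst hd hreg (f := ⟨(u, v), huv⟩) he).trans (ih rfl hf)

end SimpleGraph

theorem stmt9_general {V : Type*} [Fintype V] (G : SimpleGraph V)
    [DecidableRel G.Adj] (d : ℕ) (hd : 3 ≤ d)
    (hreg : G.IsRegularOfDegree d) (hconn : G.Connected) :
    ∀ d₁ d₂ : G.Dart, Relation.ReflTransGen (IrredStep G) d₁ d₂ := by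
  intro d₁ d₂
  obtain ⟨p⟩ := hconn.preconnected d₁.snd d₂.fst
  exact SimpleGraph.reflTransGen_irredStep_of_walk hd hreg p rfl rfl

/-- If `G` is a connected `d`-regular finite graph with `d ≥ 3`, then the
non-backtracking edge graph `G_irred` is strongly connected. -/
theorem stmt9 {V : Type*} [Fintype V] [DecidableEq V] (G : SimpleGraph V)
    [DecidableRel G.Adj] (d : ℕ) (hd : 3 ≤ d)
    (hreg : G.IsRegularOfDegree d) (hconn : G.Connected) :
    ∀ d₁ d₂ : G.Dart, Relation.ReflTransGen (IrredStep G) d₁ d₂ :=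
  stmt9_general G d hd hreg hconn
end

section
/- Let G be a graph with distinct vertices u ≠ v joined by an edge e, and let G_e be the contraction of G along e (discard e, identify u and v). Then λ_irred(G) ≤ λ_irred(G_e), where λ_irred(H) is the growth rate of the number of irreducible (non-backtracking) closed walks in H, i.e., the Perron value of H_irred. -/
open scoped Classical

/-- A multigraph, given by a vertex set, a set of darts (directed edges), an involution pairing
each dart with its reverse, and a tail map.  Parallel edges, whole-loops and half-loops are all
allowed. -/
structure Multigraph where
  V : Type
  D : Type
  inv : D → D
  tl : D → V
  inv_invol : ∀ d, inv (inv d) = d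

/-- The head of a dart: the tail of its reverse. -/
def Multigraph.hd (G : Multigraph) (d : G.D) : G.V := G.tl (G.inv d)

/-- The number of irreducible (non-backtracking) closed walks of length `k` in `G`:
lists of `k` consecutively-composable darts with no step immediately followed by its reverse,
whose first tail equals the last head. -/
noncomputable def Multigraph.cWalks (G : Multigraph) (k : ℕ) : ℕ :=
  Nat.card {l : List G.D // l.length = k ∧
    List.Chain' (fun a b => G.tl b = G.hd a ∧ b ≠ G.inv a) l ∧
    ∀ d₁ ∈ l.head?, ∀ d₂ ∈ l.getLast?, G.tl d₁ = G.hd d₂}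

/-- `λ_irred(G)`: the growth rate of the number of irreducible closed walks, i.e. the Perron
value of the non-backtracking dart graph `G_irred`. -/
noncomputable def Multigraph.lamIrred (G : Multigraph) : ℝ :=
  Filter.limsup (fun k : ℕ => (G.cWalks k : ℝ) ^ ((k : ℝ)⁻¹)) Filter.atTop

/-- The contraction of `G` along the (non-loop) edge `{e, inv e}`: the two darts of the edge are
discarded and the head of `e` is identified with its tail (every dart previously attached to
`hd e` is reattached to `tl e`; the vertex `hd e` becomes isolated). -/
noncomputable def Multigraph.contract (G : Multigraph) (e : G.D) : Multigraph where
  V := G.V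
  D := {d : G.D // d ≠ e ∧ d ≠ G.inv e}
  inv := fun d => ⟨G.inv d.1, by
    constructor
    · intro h
      exact d.2.2 ((G.inv_invol d.1).symm.trans (congrArg G.inv h))
    · intro h
      exact d.2.1 (by
        have := congrArg G.inv h
        rwa [G.inv_invol, G.inv_invol] at this)⟩
  tl := fun d => if G.tl d.1 = G.hd e then G.tl e else G.tl d.1
  inv_invol := fun d => Subtype.ext (G.inv_invol d.1)

/-!
Deleting the darts `e` and `inv e` from an irreducible closed walk of `G` gives an irreducible
closed walk of `G_e`.  Consecutive darts stay consecutive once `hd e` is merged into `tl e`; two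
darts separated by a single deleted dart cannot be mutually reverse, since that deleted dart
would then be a loop; and, `e` not being a loop, an irreducible walk never uses the edge twice in
a row, so a walk of length `k` keeps between `k / 2` and `k` darts.  The walk is recovered from
its image and its first dart, because a deleted dart is determined by its tail.  Hence
`cWalks G k ≤ (|D| + 1) * ∑_{k/2 ≤ m ≤ k} cWalks G_e m`, and neither the constant factor, nor
the at most `k + 1` summands, nor the spread of lengths between `k / 2` and `k` changes the
exponential growth rate.
-/

open Filter Finset

theorem List.length_le_two_mul_length_filterMap_add_one {α β : Type*} {f : α → Option β} :
    ∀ {l : List α}, l.IsChain (fun a b => f a = none → f b ≠ none) →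
      l.length ≤ 2 * (l.filterMap f).length + 1
  | [], _ => by simp
  | [_], _ => by simp
  | a :: b :: t, h => by
    cases ha : f a with
    | none =>
      obtain ⟨y, hy⟩ := Option.ne_none_iff_exists'.1 ((List.isChain_cons_cons.1 h).1 ha)
      have := length_le_two_mul_length_filterMap_add_one (l := t) h.tail.tail
      simp only [List.filterMap_cons, ha, hy, List.length_cons]
      omega
    | some _ =>
      have := length_le_two_mul_length_filterMap_add_one (l := b :: t) h.tail
      simp only [List.filterMap_cons_some ha, List.length_cons] at this ⊢
      omega

theorem List.ncard_length_eq (α : Type*) [Finite α] (n : ℕ) :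
    {l : List α | l.length = n}.ncard = Nat.card α ^ n := by
  have := Fintype.ofFinite α
  change Nat.card (List.Vector α n) = _
  rw [Nat.card_eq_fintype_card, card_vector, Nat.card_eq_fintype_card]

theorem limsup_rpow_inv_le_of_eventually_le_pow {a : ℕ → ℝ} (ha : ∀ k, 0 ≤ a k) {r : ℝ}
    (hr : 0 ≤ r) (h : ∀ᶠ k in atTop, a k ≤ r ^ k) :
    limsup (fun k : ℕ => a k ^ (k : ℝ)⁻¹) atTop ≤ r := by
  refine limsup_le_of_le (isCoboundedUnder_le_of_le atTop fun k => Real.rpow_nonneg (ha k) _) ?_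
  filter_upwards [h, eventually_gt_atTop 0] with k hk hk0
  rwa [Real.rpow_inv_le_iff_of_pos (ha k) hr (by positivity), Real.rpow_natCast]

theorem eventually_le_pow_of_limsup_rpow_inv_lt {c : ℕ → ℝ} (hc : ∀ m, 0 ≤ c m)
    (hbdd : IsBoundedUnder (· ≤ ·) atTop fun m : ℕ => c m ^ (m : ℝ)⁻¹) {q : ℝ}
    (hq : limsup (fun m : ℕ => c m ^ (m : ℝ)⁻¹) atTop < q) :
    ∀ᶠ m in atTop, c m ≤ q ^ m := by
  filter_upwards [eventually_lt_of_limsup_lt hq hbdd, eventually_gt_atTop 0] with m hm hm0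
  have hq0 : 0 ≤ q := (Real.rpow_nonneg (hc m) _).trans hm.le
  rw [← Real.rpow_natCast, ← Real.rpow_inv_le_iff_of_pos (hc m) hq0 (by positivity)]
  exact hm.le

theorem eventually_mul_pow_le_pow {C q r : ℝ} (hq : 0 ≤ q) (hqr : q < r) :
    ∀ᶠ k : ℕ in atTop, C * (k + 1) * q ^ k ≤ r ^ k := by
  have hr : 0 < r := hq.trans_lt hqr
  have hρ : q / r < 1 := (div_lt_one hr).2 hqr
  have hlim : Tendsto (fun k : ℕ => C * (k * (q / r) ^ k + (q / r) ^ k)) atTop (nhds 0) := by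
    simpa using ((tendsto_self_mul_const_pow_of_lt_one (by positivity) hρ).add
      (tendsto_pow_atTop_nhds_zero_of_lt_one (by positivity) hρ)).const_mul C
  filter_upwards [hlim.eventually_lt_const one_pos] with k hk
  calc C * (k + 1) * q ^ k = C * (k * (q / r) ^ k + (q / r) ^ k) * r ^ k := by
        rw [div_pow]
        field_simp
    _ ≤ r ^ k := by nlinarith [pow_pos hr k]

theorem natCast_le_pow_of_le_pow {n m k : ℕ} {q : ℝ} (hq : 0 ≤ q) (hm : m ≠ 0) (hmk : m ≤ k)
    (h : (n : ℝ) ≤ q ^ m) : (n : ℝ) ≤ q ^ k := by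
  rcases le_or_gt 1 q with hq1 | hq1
  · exact h.trans (pow_le_pow_right₀ hq1 hmk)
  · have hn : (n : ℝ) < 1 := h.trans_lt (pow_lt_one₀ hq hq1 hm)
    obtain rfl : n = 0 := Nat.lt_one_iff.1 (by exact_mod_cast hn)
    simpa using pow_nonneg hq k

theorem limsup_rpow_inv_le_of_le_mul_sum {a c : ℕ → ℕ} {C N : ℕ} (hc : ∀ m, c m ≤ N ^ m)
    (hac : ∀ k, a k ≤ C * ∑ m ∈ Icc (k / 2) k, c m) :
    limsup (fun k : ℕ => (a k : ℝ) ^ (k : ℝ)⁻¹) atTop ≤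
      limsup (fun m : ℕ => (c m : ℝ) ^ (m : ℝ)⁻¹) atTop := by
  have hbdd : IsBoundedUnder (· ≤ ·) atTop fun m : ℕ => (c m : ℝ) ^ (m : ℝ)⁻¹ := by
    refine isBoundedUnder_of_eventually_le (a := N) ?_
    filter_upwards [eventually_gt_atTop 0] with m hm
    rw [Real.rpow_inv_le_iff_of_pos (c m).cast_nonneg N.cast_nonneg (by positivity),
      Real.rpow_natCast]
    exact_mod_cast hc m
  have hL0 : 0 ≤ limsup (fun m : ℕ => (c m : ℝ) ^ (m : ℝ)⁻¹) atTop :=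
    le_limsup_of_frequently_le (Frequently.of_forall fun m => Real.rpow_nonneg (c m).cast_nonneg _)
      hbdd
  refine le_of_forall_gt_imp_ge_of_dense fun r hr => ?_
  obtain ⟨q, hLq, hqr⟩ := exists_between hr
  have hq0 : 0 ≤ q := hL0.trans hLq.le
  obtain ⟨M, hM⟩ := eventually_atTop.1
    (eventually_le_pow_of_limsup_rpow_inv_lt (fun m => (c m).cast_nonneg) hbdd hLq)
  refine limsup_rpow_inv_le_of_eventually_le_pow (fun k => (a k).cast_nonneg) (hq0.trans hqr.le) ?_
  filter_upwards [eventually_mul_pow_le_pow (C := C) hq0 hqr, eventually_ge_atTop (2 * M + 2)]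
    with k hk hkM
  calc (a k : ℝ) ≤ C * ∑ m ∈ Icc (k / 2) k, (c m : ℝ) := by exact_mod_cast hac k
    _ ≤ C * ∑ m ∈ Icc (k / 2) k, q ^ k := by
      gcongr with m hm
      rw [mem_Icc] at hm
      exact natCast_le_pow_of_le_pow hq0 (by omega) hm.2 (hM m (by omega))
    _ ≤ C * (k + 1) * q ^ k := by
      rw [sum_const, Nat.card_Icc, nsmul_eq_mul, mul_assoc]
      gcongr
      exact_mod_cast Nat.sub_le _ _
    _ ≤ r ^ k := hk

namespace Multigraph

variable (G : Multigraph)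

def Step (a b : G.D) : Prop := G.tl b = G.hd a ∧ b ≠ G.inv a

def closedWalks (k : ℕ) : Set (List G.D) :=
  {l | l.length = k ∧ l.IsChain G.Step ∧ ∀ d₁ ∈ l.head?, ∀ d₂ ∈ l.getLast?, G.tl d₁ = G.hd d₂}

theorem cWalks_eq_ncard (k : ℕ) : G.cWalks k = (G.closedWalks k).ncard := rfl

theorem closedWalks_subset (k : ℕ) : G.closedWalks k ⊆ {l | l.length = k} := fun _ hl => hl.1

theorem closedWalks_finite [Finite G.D] (k : ℕ) : (G.closedWalks k).Finite :=
  (List.finite_length_eq _ k).subset (G.closedWalks_subset k)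

theorem cWalks_le_card_pow [Finite G.D] (k : ℕ) : G.cWalks k ≤ Nat.card G.D ^ k := by
  rw [cWalks_eq_ncard, ← List.ncard_length_eq]
  exact Set.ncard_le_ncard (G.closedWalks_subset k) (List.finite_length_eq _ _)

instance [Finite G.D] (e : G.D) : Finite (G.contract e).D := Subtype.finite

theorem hd_inv (d : G.D) : G.hd (G.inv d) = G.tl d := by rw [hd, inv_invol]

variable {G} (e : G.D)

def IsDartOf (d : G.D) : Prop := d = e ∨ d = G.inv e

noncomputable def contractVertex (w : G.V) : G.V := if w = G.hd e then G.tl e else w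

def contractDart {d : G.D} (h : ¬ G.IsDartOf e d) : (G.contract e).D := ⟨d, not_or.1 h⟩

noncomputable def contractWalk (l : List G.D) : List (G.contract e).D :=
  l.filterMap fun d => if h : G.IsDartOf e d then none else some (G.contractDart e h)

variable {e}

def uncontract (d : (G.contract e).D) : G.D := d.1

@[simp] theorem uncontract_contractDart {d : G.D} (h : ¬ G.IsDartOf e d) :
    G.uncontract (G.contractDart e h) = d :=
  rfl

theorem uncontract_injective : Function.Injective (G.uncontract (e := e)) :=
  fun _ _ h => Subtype.ext h

theorem contract_tl (d : (G.contract e).D) :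
    (G.contract e).tl d = G.contractVertex e (G.tl (G.uncontract d)) :=
  rfl

theorem contract_hd (d : (G.contract e).D) :
    (G.contract e).hd d = G.contractVertex e (G.hd (G.uncontract d)) :=
  rfl

theorem contract_step_iff (a b : (G.contract e).D) :
    (G.contract e).Step a b ↔
      G.contractVertex e (G.tl (G.uncontract b)) = G.contractVertex e (G.hd (G.uncontract a)) ∧
        G.uncontract b ≠ G.inv (G.uncontract a) := by
  rw [Step, contract_tl, contract_hd]
  exact Iff.rfl.and (uncontract_injective.ne_iff (x := b) (y := (G.contract e).inv a)).symm

theorem contractVertex_hd_of_isDartOf {d : G.D} (hd : G.IsDartOf e d) :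
    G.contractVertex e (G.hd d) = G.contractVertex e (G.tl d) := by
  have hhd : G.contractVertex e (G.hd e) = G.tl e := if_pos rfl
  have htl : G.contractVertex e (G.tl e) = G.tl e := ite_self _
  rcases hd with rfl | rfl
  · rw [hhd, htl]
  · rw [hd_inv, htl]
    exact hhd.symm

@[simp] theorem contractWalk_nil : G.contractWalk e [] = [] := rfl

theorem contractWalk_cons_of_isDartOf {a : G.D} (ha : G.IsDartOf e a) (l : List G.D) :
    G.contractWalk e (a :: l) = G.contractWalk e l := by
  simp [contractWalk, ha]

theorem contractWalk_cons_of_not_isDartOf {a : G.D} (ha : ¬ G.IsDartOf e a) (l : List G.D) :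
    G.contractWalk e (a :: l) = G.contractDart e ha :: G.contractWalk e l := by
  rw [contractWalk, List.filterMap_cons, dif_neg ha]
  rfl

theorem contractWalk_append (l₁ l₂ : List G.D) :
    G.contractWalk e (l₁ ++ l₂) = G.contractWalk e l₁ ++ G.contractWalk e l₂ :=
  List.filterMap_append

theorem contract_step_of_step {a b : G.D} (hab : G.Step a b) (ha : ¬ G.IsDartOf e a)
    (hb : ¬ G.IsDartOf e b) : (G.contract e).Step (G.contractDart e ha) (G.contractDart e hb) :=
  (contract_step_iff _ _).2 ⟨congrArg _ hab.1, hab.2⟩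

theorem length_contractWalk_le (l : List G.D) : (G.contractWalk e l).length ≤ l.length :=
  List.length_filterMap_le _ _

section NonLoop

variable (huv : G.tl e ≠ G.hd e)
include huv

theorem IsDartOf.tl_ne_hd {d : G.D} (hd : G.IsDartOf e d) : G.tl d ≠ G.hd d := by
  rcases hd with rfl | rfl
  · exact huv
  · rw [hd_inv]
    exact huv.symm

theorem IsDartOf.eq_of_tl_eq {a b : G.D} (ha : G.IsDartOf e a) (hb : G.IsDartOf e b)
    (h : G.tl a = G.tl b) : a = b := by
  rcases ha with rfl | rfl <;> rcases hb with rfl | rfl <;> simp_all [hd]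

theorem not_isDartOf_of_step {a b : G.D} (hab : G.Step a b) (ha : G.IsDartOf e a) :
    ¬ G.IsDartOf e b := by
  intro hb
  rcases ha with rfl | rfl <;> rcases hb with rfl | rfl <;> simp_all [Step, hd, inv_invol]

theorem length_le_two_mul_length_contractWalk_add_one {l : List G.D} (hl : l.IsChain G.Step) :
    l.length ≤ 2 * (G.contractWalk e l).length + 1 := by
  refine List.length_le_two_mul_length_filterMap_add_one (hl.imp fun a b hab hnone => ?_)
  have ha : G.IsDartOf e a := by_contra fun h => by simp [h] at hnone
  simp [not_isDartOf_of_step huv hab ha]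

theorem contract_step_of_step_of_step {a s c : G.D} (has : G.Step a s) (hsc : G.Step s c)
    (hs : G.IsDartOf e s) (ha : ¬ G.IsDartOf e a) (hc : ¬ G.IsDartOf e c) :
    (G.contract e).Step (G.contractDart e ha) (G.contractDart e hc) := by
  refine (contract_step_iff _ _).2 ⟨?_, fun hca => hs.tl_ne_hd huv ?_⟩
  · rw [uncontract_contractDart, uncontract_contractDart, hsc.1,
      contractVertex_hd_of_isDartOf hs, has.1]
  · rw [has.1, ← hsc.1, show c = G.inv a from hca]
    rfl

theorem contract_step_head_contractWalk {a : G.D} {l : List G.D} (ha : ¬ G.IsDartOf e a)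
    (h : (a :: l).IsChain G.Step) :
    ∀ y ∈ (G.contractWalk e l).head?, (G.contract e).Step (G.contractDart e ha) y := by
  intro y hy
  rcases l with _ | ⟨b, t⟩
  · simp at hy
  have hab : G.Step a b := (List.isChain_cons_cons.1 h).1
  by_cases hb : G.IsDartOf e b
  · rcases t with _ | ⟨c, t⟩
    · simp [contractWalk_cons_of_isDartOf hb] at hy
    have hbc : G.Step b c := (List.isChain_cons_cons.1 h.tail).1
    have hc := not_isDartOf_of_step huv hbc hb
    rw [contractWalk_cons_of_isDartOf hb, contractWalk_cons_of_not_isDartOf hc] at hy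
    obtain rfl := Option.some.inj hy
    exact contract_step_of_step_of_step huv hab hbc hb ha hc
  · rw [contractWalk_cons_of_not_isDartOf hb] at hy
    obtain rfl := Option.some.inj hy
    exact contract_step_of_step hab ha hb

theorem isChain_contractWalk {l : List G.D} (h : l.IsChain G.Step) :
    (G.contractWalk e l).IsChain (G.contract e).Step := by
  induction l with
  | nil => simp
  | cons a l ih =>
    by_cases ha : G.IsDartOf e a
    · rw [contractWalk_cons_of_isDartOf ha]
      exact ih h.tail
    · rw [contractWalk_cons_of_not_isDartOf ha, List.isChain_cons]
      exact ⟨contract_step_head_contractWalk huv ha h, ih h.tail⟩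

theorem contractVertex_tl_head {l : List G.D} (h : l.IsChain G.Step) :
    ∀ b ∈ (G.contractWalk e l).head?, ∀ a ∈ l.head?,
      G.contractVertex e (G.tl (G.uncontract b)) = G.contractVertex e (G.tl a) := by
  intro b hb a₀ ha₀
  rcases l with _ | ⟨a, t⟩
  · simp at ha₀
  obtain rfl := Option.some.inj ha₀
  by_cases ha : G.IsDartOf e a
  · rcases t with _ | ⟨c, t⟩
    · simp [contractWalk_cons_of_isDartOf ha] at hb
    have hac : G.Step a c := (List.isChain_cons_cons.1 h).1
    rw [contractWalk_cons_of_isDartOf ha,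
      contractWalk_cons_of_not_isDartOf (not_isDartOf_of_step huv hac ha)] at hb
    obtain rfl := Option.some.inj hb
    rw [uncontract_contractDart, hac.1, contractVertex_hd_of_isDartOf ha]
  · rw [contractWalk_cons_of_not_isDartOf ha] at hb
    obtain rfl := Option.some.inj hb
    rfl

theorem contractVertex_hd_getLast {l : List G.D} (h : l.IsChain G.Step) :
    ∀ b ∈ (G.contractWalk e l).getLast?, ∀ a ∈ l.getLast?,
      G.contractVertex e (G.hd (G.uncontract b)) = G.contractVertex e (G.hd a) := by
  intro b hb a₀ ha₀
  obtain rfl | ⟨t, a, rfl⟩ := l.eq_nil_or_concat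
  · simp at ha₀
  rw [List.concat_eq_append, List.getLast?_concat] at ha₀
  obtain rfl := Option.some.inj ha₀
  rw [List.concat_eq_append, contractWalk_append] at hb
  by_cases ha : G.IsDartOf e a
  · obtain rfl | ⟨t, c, rfl⟩ := t.eq_nil_or_concat
    · simp [contractWalk_cons_of_isDartOf ha] at hb
    rw [List.concat_eq_append] at h hb
    have hca : G.Step c a := (List.isChain_append.1 h).2.2 c (by simp) a (by simp)
    have hc : ¬ G.IsDartOf e c := fun hc => not_isDartOf_of_step huv hca hc ha
    rw [contractWalk_append, contractWalk_cons_of_not_isDartOf hc,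
      contractWalk_cons_of_isDartOf ha] at hb
    simp only [contractWalk_nil, List.append_nil, List.getLast?_concat] at hb
    obtain rfl := Option.some.inj hb
    rw [uncontract_contractDart, contractVertex_hd_of_isDartOf ha, hca.1]
  · rw [contractWalk_cons_of_not_isDartOf ha] at hb
    simp only [contractWalk_nil, List.getLast?_concat] at hb
    obtain rfl := Option.some.inj hb
    rfl

theorem contractWalk_mem_closedWalks {l : List G.D} {k : ℕ} (hl : l ∈ G.closedWalks k) :
    G.contractWalk e l ∈ (G.contract e).closedWalks (G.contractWalk e l).length := by
  refine ⟨rfl, isChain_contractWalk huv hl.2.1, fun b₁ hb₁ b₂ hb₂ => ?_⟩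
  have hne : l ≠ [] := by
    rintro rfl
    simp at hb₁
  rw [contract_tl, contract_hd,
    contractVertex_tl_head huv hl.2.1 b₁ hb₁ _ (List.head?_eq_some_head hne),
    hl.2.2 _ (List.head?_eq_some_head hne) _ (List.getLast?_eq_some_getLast hne),
    contractVertex_hd_getLast huv hl.2.1 b₂ hb₂ _ (List.getLast?_eq_some_getLast hne)]

theorem isDartOf_of_contractWalk_cons_eq {a b : G.D} {t₁ t₂ : List G.D}
    (h₁ : (a :: t₁).IsChain G.Step) (hab : G.tl a = G.tl b)
    (hcw : G.contractWalk e (a :: t₁) = G.contractWalk e (b :: t₂)) (ha : G.IsDartOf e a) :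
    G.IsDartOf e b := by
  by_contra hb
  rw [contractWalk_cons_of_isDartOf ha, contractWalk_cons_of_not_isDartOf hb] at hcw
  rcases t₁ with _ | ⟨c, t₁⟩
  · simp at hcw
  have hac : G.Step a c := (List.isChain_cons_cons.1 h₁).1
  rw [contractWalk_cons_of_not_isDartOf (not_isDartOf_of_step huv hac ha)] at hcw
  have hcb : c = b := congrArg G.uncontract (List.cons_eq_cons.1 hcw).1
  exact ha.tl_ne_hd huv (hab.trans (hcb ▸ hac.1))

theorem eq_and_contractWalk_eq_of_contractWalk_cons_eq {a b : G.D} {t₁ t₂ : List G.D}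
    (h₁ : (a :: t₁).IsChain G.Step) (h₂ : (b :: t₂).IsChain G.Step) (hab : G.tl a = G.tl b)
    (hcw : G.contractWalk e (a :: t₁) = G.contractWalk e (b :: t₂)) :
    a = b ∧ G.contractWalk e t₁ = G.contractWalk e t₂ := by
  by_cases ha : G.IsDartOf e a
  · have hb := isDartOf_of_contractWalk_cons_eq huv h₁ hab hcw ha
    rw [contractWalk_cons_of_isDartOf ha, contractWalk_cons_of_isDartOf hb] at hcw
    exact ⟨ha.eq_of_tl_eq huv hb hab, hcw⟩
  · have hb : ¬ G.IsDartOf e b := fun hb =>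
      ha (isDartOf_of_contractWalk_cons_eq huv h₂ hab.symm hcw.symm hb)
    rw [contractWalk_cons_of_not_isDartOf ha, contractWalk_cons_of_not_isDartOf hb] at hcw
    obtain ⟨h, ht⟩ := List.cons_eq_cons.1 hcw
    exact ⟨congrArg G.uncontract h, ht⟩

theorem eq_of_contractWalk_eq {l₁ l₂ : List G.D} (h₁ : l₁.IsChain G.Step)
    (h₂ : l₂.IsChain G.Step) (hlen : l₁.length = l₂.length)
    (htl : ∀ a ∈ l₁.head?, ∀ b ∈ l₂.head?, G.tl a = G.tl b)
    (hcw : G.contractWalk e l₁ = G.contractWalk e l₂) : l₁ = l₂ := by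
  induction l₁ generalizing l₂ with
  | nil => exact (List.length_eq_zero_iff.1 hlen.symm).symm
  | cons a t₁ ih =>
    rcases l₂ with _ | ⟨b, t₂⟩
    · simp at hlen
    obtain ⟨rfl, hcw'⟩ :=
      eq_and_contractWalk_eq_of_contractWalk_cons_eq huv h₁ h₂ (htl a rfl b rfl) hcw
    refine congrArg (a :: ·) (ih h₁.tail h₂.tail (by simpa using hlen) (fun c hc d hd => ?_) hcw')
    rw [((List.isChain_cons.1 h₁).1 c hc).1, ((List.isChain_cons.1 h₂).1 d hd).1]

theorem cWalks_le_mul_sum_cWalks_contract [Finite G.D] (k : ℕ) :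
    G.cWalks k ≤ (Nat.card G.D + 1) * ∑ m ∈ Icc (k / 2) k, (G.contract e).cWalks m := by
  simp only [cWalks_eq_ncard]
  set T := (Set.univ : Set (Option G.D)) ×ˢ ⋃ m ∈ Icc (k / 2) k, (G.contract e).closedWalks m
  have hmaps : ∀ l ∈ G.closedWalks k, (l.head?, G.contractWalk e l) ∈ T := by
    intro l hl
    refine ⟨Set.mem_univ _, Set.mem_iUnion₂.2 ⟨_, ?_, contractWalk_mem_closedWalks huv hl⟩⟩
    have hlen : l.length = k := hl.1
    have := length_le_two_mul_length_contractWalk_add_one huv hl.2.1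
    have := length_contractWalk_le (e := e) l
    rw [mem_Icc]
    omega
  have hinj : Set.InjOn (fun l => (l.head?, G.contractWalk e l)) (G.closedWalks k) := by
    rintro l₁ ⟨hlen₁, h₁, -⟩ l₂ ⟨hlen₂, h₂, -⟩ heq
    have hhead : l₁.head? = l₂.head? := congrArg Prod.fst heq
    refine eq_of_contractWalk_eq huv h₁ h₂ (hlen₁.trans hlen₂.symm) (fun a ha b hb => ?_)
      (congrArg Prod.snd heq)
    rw [Option.mem_unique (show a ∈ l₂.head? from hhead ▸ ha) hb]
  have hT : T.Finite :=
    Set.finite_univ.prod (Set.Finite.biUnion (finite_toSet _) fun m _ => closedWalks_finite _ m)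
  calc (G.closedWalks k).ncard ≤ T.ncard := Set.ncard_le_ncard_of_injOn _ hmaps hinj hT
    _ = (Nat.card G.D + 1) * (⋃ m ∈ Icc (k / 2) k, (G.contract e).closedWalks m).ncard := by
      rw [Set.ncard_prod, Set.ncard_univ, Finite.card_option]
    _ ≤ _ := Nat.mul_le_mul_left _ (Finset.set_ncard_biUnion_le _ _)

end NonLoop

end Multigraph

/-- Let `G` be a (finite) multigraph with an edge `e` joining two distinct
vertices `u ≠ v`, and let `G_e` be the contraction of `G` along `e`.  Then
`λ_irred(G) ≤ λ_irred(G_e)`. -/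
theorem stmt13 (G : Multigraph) [Finite G.D] (e : G.D) (huv : G.tl e ≠ G.hd e) :
    G.lamIrred ≤ (G.contract e).lamIrred :=
  limsup_rpow_inv_le_of_le_mul_sum (G.contract e).cWalks_le_card_pow
    (Multigraph.cWalks_le_mul_sum_cWalks_contract huv)
end

section
/- Let s ≥ 1 and let g be a polynomial of degree ≤ s−1 with real coefficients such that |g(i)| ≤ 1 for all integers i with a ≤ i ≤ b (integers a ≤ b). Then |g(i)| ≤ 2^s − 1 for all integers i with a − (b−a)/(s−1) ≤ i ≤ a. -/
/-!
A polynomial of degree `< s` is annihilated by the `s`-th forward difference with any step `h`,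
so `g x = -∑_{k=1}^{s} (-1)^k (s choose k) g (x + k h)`. Taking `x = i` and `h = a - i`, the
nodes `i + k (a - i)`, `1 ≤ k ≤ s`, are integers in `[a, b]` exactly when `(s - 1)(a - i) ≤ b - a`,
and the coefficients sum to `2^s - 1` in absolute value.
-/

open Polynomial Finset
open scoped fwdDiff

theorem Polynomial.fwdDiff_iter_eval_eq_zero_of_natDegree_lt {R : Type*} [CommRing R]
    {P : R[X]} {n : ℕ} (hP : P.natDegree < n) (h : R) : (Δ_[h])^[n] P.eval = 0 := by
  funext y
  -- reduce to step `1` by rescaling: `P (y + k h) = Q k` with `Q = P ∘ (h X + y)`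
  set Q := P.comp (C h * X + C y)
  have hQ : Q.natDegree < n :=
    (natDegree_comp_le.trans (mul_le_of_le_one_right' natDegree_linear_le)).trans_lt hP
  have := congrFun (fwdDiff_iter_eq_zero_of_degree_lt hQ) 0
  simp only [fwdDiff_iter_eq_sum_shift, Q, eval_comp] at this ⊢
  rw [Pi.zero_apply] at this ⊢
  convert this using 4 with k
  simp only [eval_add, eval_mul, eval_C, eval_X, nsmul_eq_mul, mul_one, zero_add]
  ring

theorem norm_le_of_fwdDiff_iter_eq_zero {M G : Type*} [AddCommMonoid M] [SeminormedAddCommGroup G]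
    {f : M → G} {h y : M} {n : ℕ} (hf : (Δ_[h])^[n] f y = 0) {C : ℝ}
    (hC : ∀ k, 1 ≤ k → k ≤ n → ‖f (y + k • h)‖ ≤ C) : ‖f y‖ ≤ (2 ^ n - 1) * C := by
  rw [fwdDiff_iter_eq_sum_shift, sum_range_succ', zero_smul, add_zero, Nat.sub_zero,
    Nat.choose_zero_right, Nat.cast_one, mul_one, add_eq_zero_iff_neg_eq] at hf
  have hsum : ∑ k ∈ range n, (n.choose (k + 1) : ℝ) = 2 ^ n - 1 := by
    have := Nat.sum_range_choose n
    rw [sum_range_succ', Nat.choose_zero_right] at this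
    rw [eq_sub_iff_add_eq]
    exact_mod_cast this
  calc ‖f y‖ = ‖((-1 : ℤ) ^ n) • f y‖ := by
        rcases neg_one_pow_eq_or ℤ n with h1 | h1 <;> simp [h1]
    _ = ‖∑ k ∈ range n, ((-1 : ℤ) ^ (n - (k + 1)) * n.choose (k + 1)) • f (y + (k + 1) • h)‖ := by
        rw [← hf, norm_neg]
    _ ≤ ∑ k ∈ range n, n.choose (k + 1) * C := by
        refine (norm_sum_le _ _).trans (sum_le_sum fun k hk => ?_)
        refine (norm_zsmul_le _ _).trans ?_
        rw [norm_mul, norm_pow, norm_neg, norm_one, one_pow, one_mul, Int.norm_natCast]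
        gcongr
        exact hC (k + 1) le_add_self (mem_range.mp hk)
    _ = (2 ^ n - 1) * C := by rw [← sum_mul, hsum]

/-- Let `s ≥ 1` and let `g` be a real polynomial of degree `≤ s−1` with
`|g(i)| ≤ 1` for all integers `i` with `a ≤ i ≤ b` (integers `a ≤ b`).  Then
`|g(i)| ≤ 2^s − 1` for all integers `i` with `a − (b−a)/(s−1) ≤ i ≤ a`. -/
theorem stmt18 (s : ℕ) (hs : 1 ≤ s) (g : Polynomial ℝ) (hdeg : g.natDegree ≤ s - 1)
    (a b : ℤ) (hab : a ≤ b)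
    (hbound : ∀ i : ℤ, a ≤ i → i ≤ b → |g.eval (i : ℝ)| ≤ 1) :
    ∀ i : ℤ, (a : ℝ) - ((b : ℝ) - (a : ℝ)) / ((s : ℝ) - 1) ≤ (i : ℝ) → i ≤ a →
      |g.eval (i : ℝ)| ≤ 2 ^ s - 1 := by
  intro i hlo hia
  -- for `s = 1` the division by `0` makes `hlo` read `a ≤ i`, and `hab` gives the claim
  have hstep : (a - i) * ((s : ℤ) - 1) ≤ b - a := by
    have hs' : (0 : ℝ) ≤ s - 1 := sub_nonneg.mpr (by exact_mod_cast hs)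
    have hab' : (0 : ℝ) ≤ b - a := sub_nonneg.mpr (by exact_mod_cast hab)
    have := (mul_le_of_le_div₀ hab' hs' (by linarith) : ((a : ℝ) - i) * ((s : ℝ) - 1) ≤ b - a)
    exact_mod_cast this
  have hzero : (Δ_[((a - i : ℤ) : ℝ)])^[s] g.eval (i : ℝ) = 0 := by
    rw [fwdDiff_iter_eval_eq_zero_of_natDegree_lt (by omega)]
    rfl
  have hnodes : ∀ k, 1 ≤ k → k ≤ s → ‖g.eval ((i : ℝ) + k • ((a - i : ℤ) : ℝ))‖ ≤ 1 := by
    intro k hk1 hks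
    have hk1' : (1 : ℤ) ≤ k := by exact_mod_cast hk1
    have hks' : (k : ℤ) ≤ s := by exact_mod_cast hks
    simpa [nsmul_eq_mul] using hbound (i + k * (a - i)) (by nlinarith) (by nlinarith)
  simpa using norm_le_of_fwdDiff_iter_eq_zero hzero hnodes
end

section
/- Let f₁, f₂ : ℕ₊ → ℝ be d-Ramanujan of order α with 1 ≤ α < d−1, i.e., f_i(k) = (d−1)^k p_i(k) + e_i(k) with p_i polynomials and |e_i(k)| ≤ c k^c α^k. Then the convolution g(k) = Σ_{j=1}^{k−1} f₁(j) f₂(k−j) is also d-Ramanujan of order α: there exist a polynomial p and a constant c' with |g(k) − (d−1)^k p(k)| ≤ c' k^{c'} α^k for all k. -/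
/-!
After dividing by `D ^ k`, where `D = d - 1`, a `d`-Ramanujan sequence of order `α` is a polynomial
up to an error `O(k ^ N * β ^ k)` with `β = α / D < 1`, and the convolution splits into three
kinds of terms. Polynomial against polynomial gives a polynomial (Faulhaber). Error against
polynomial `q`: expanding `q (k - j)` by Taylor at `k` leaves polynomials in `k` times partial sums
`∑_{j < k} e j * j ^ i` of convergent series, each equal to its limit up to a tail of size
`O(k ^ N * β ^ k)`. Error against error is `O(k ^ (N + 1) * β ^ k)` because
`β ^ j * β ^ (k - j) = β ^ k`.
-/

open Finset Polynomial

lemma Polynomial.exists_abs_eval_le (q : ℝ[X]) :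
    ∃ A, 0 ≤ A ∧ ∀ x : ℝ, 1 ≤ x → |q.eval x| ≤ A * x ^ q.natDegree := by
  refine ⟨∑ i ∈ range (q.natDegree + 1), |q.coeff i|, by positivity, fun x hx => ?_⟩
  rw [eval_eq_sum_range, sum_mul]
  refine (abs_sum_le_sum_abs _ _).trans (sum_le_sum fun i hi => ?_)
  rw [abs_mul, abs_pow, abs_of_nonneg (by linarith : 0 ≤ x)]
  exact mul_le_mul_of_nonneg_left
    (pow_le_pow_right₀ hx (Nat.lt_succ_iff.1 (mem_range.1 hi))) (abs_nonneg _)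

lemma Polynomial.eval_sub_eq_sum_hasseDeriv {R : Type*} [CommRing R] (q : R[X]) (x y : R) :
    q.eval (x - y) = ∑ i ∈ range (q.natDegree + 1), (hasseDeriv i q).eval x * (-y) ^ i := by
  rw [sub_eq_neg_add, ← taylor_eval, eval_eq_sum_range, natDegree_taylor]
  simp only [taylor_coeff]

lemma Polynomial.exists_sum_range_eval_eq_eval (p : ℝ[X]) :
    ∃ P : ℝ[X], ∀ k : ℕ, ∑ j ∈ range k, p.eval (j : ℝ) = P.eval (k : ℝ) := by
  induction p using Polynomial.induction_on' with
  | add p q hp hq =>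
    obtain ⟨P, hP⟩ := hp
    obtain ⟨Q, hQ⟩ := hq
    exact ⟨P + Q, fun k => by simp [sum_add_distrib, hP k, hQ k]⟩
  | monomial n a =>
    refine ⟨C a * ∑ i ∈ range (n + 1),
      C ((_root_.bernoulli i : ℝ) * (n + 1).choose i / (n + 1)) * X ^ (n + 1 - i), fun k => ?_⟩
    have faulhaber := congrArg (Rat.cast : ℚ → ℝ) (sum_range_pow k n)
    push_cast at faulhaber
    simp only [eval_monomial, ← mul_sum, faulhaber, eval_mul, eval_C, eval_finsetSum, eval_pow,
      eval_X]
    congr 1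
    exact sum_congr rfl fun i _ => by ring

lemma summable_add_one_pow_mul_geometric {β : ℝ} (hβ0 : 0 < β) (hβ1 : β < 1) (N : ℕ) :
    Summable fun m : ℕ => ((m : ℝ) + 1) ^ N * β ^ m := by
  have hβ : ‖β‖ < 1 := by rwa [Real.norm_eq_abs, abs_of_pos hβ0]
  have hshift : Summable fun m : ℕ => ((m + 1 : ℕ) : ℝ) ^ N * β ^ (m + 1) :=
    (summable_nat_add_iff (f := fun m : ℕ => (m : ℝ) ^ N * β ^ m) 1).2
      (summable_pow_mul_geometric_of_norm_lt_one N hβ)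
  refine (hshift.mul_left β⁻¹).congr fun m => ?_
  rw [Nat.cast_succ, pow_succ]
  field_simp

/-- Sequences are indexed from `1`: the values `u 0` and `v 0` never enter. -/
def seqConv (u v : ℕ → ℝ) (k : ℕ) : ℝ :=
  ∑ j ∈ Ico 1 k, u j * v (k - j)

lemma seqConv_comm (u v : ℕ → ℝ) : seqConv u v = seqConv v u := by
  funext k
  have hreflect := sum_Ico_reflect (fun j => v j * u (k - j)) 1 (Nat.le_succ k)
  simp only [Nat.add_sub_cancel, Nat.add_sub_cancel_left] at hreflect
  rw [seqConv, seqConv, ← hreflect]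
  refine sum_congr rfl fun j hj => ?_
  rw [Nat.sub_sub_self (mem_Ico.1 hj).2.le, mul_comm]

lemma seqConv_add_right (u v w : ℕ → ℝ) : seqConv u (v + w) = seqConv u v + seqConv u w := by
  funext k
  simp [seqConv, mul_add, sum_add_distrib]

lemma seqConv_div_pow {r : ℝ} (hr : r ≠ 0) (u v : ℕ → ℝ) :
    (fun k => seqConv u v k / r ^ k) = seqConv (fun j => u j / r ^ j) (fun j => v j / r ^ j) := by
  funext k
  rw [seqConv, seqConv, sum_div]
  refine sum_congr rfl fun j hj => ?_
  rw [← pow_mul_pow_sub r (mem_Ico.1 hj).2.le]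
  field_simp

def IsPolyGeomBounded (β : ℝ) (u : ℕ → ℝ) : Prop :=
  ∃ (C : ℝ) (N : ℕ), 0 ≤ C ∧ ∀ k, 1 ≤ k → |u k| ≤ C * (k : ℝ) ^ N * β ^ k

def HasPolyAsymptotics (β : ℝ) (u : ℕ → ℝ) : Prop :=
  ∃ p : ℝ[X], IsPolyGeomBounded β fun k => u k - p.eval (k : ℝ)

def IsRamanujan (D α : ℝ) (f : ℕ → ℝ) : Prop :=
  ∃ (p : ℝ[X]) (c : ℝ), 0 < c ∧ ∀ k : ℕ, 1 ≤ k →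
    |f k - D ^ k * p.eval (k : ℝ)| ≤ c * (k : ℝ) ^ c * α ^ k

namespace IsPolyGeomBounded

variable {β : ℝ} {u v : ℕ → ℝ}

lemma zero : IsPolyGeomBounded β fun _ => 0 :=
  ⟨0, 0, le_rfl, fun k _ => by simp⟩

lemma congr (hu : IsPolyGeomBounded β u) (h : ∀ k, 1 ≤ k → u k = v k) :
    IsPolyGeomBounded β v := by
  obtain ⟨C, N, hC, hu⟩ := hu
  exact ⟨C, N, hC, fun k hk => h k hk ▸ hu k hk⟩

lemma add (hβ : 0 ≤ β) (hu : IsPolyGeomBounded β u) (hv : IsPolyGeomBounded β v) :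
    IsPolyGeomBounded β (u + v) := by
  obtain ⟨C₁, N₁, hC₁, hu⟩ := hu
  obtain ⟨C₂, N₂, hC₂, hv⟩ := hv
  refine ⟨C₁ + C₂, N₁ + N₂, by positivity, fun k hk => ?_⟩
  have hk1 : (1 : ℝ) ≤ k := by exact_mod_cast hk
  calc |u k + v k| ≤ |u k| + |v k| := abs_add_le _ _
    _ ≤ C₁ * (k : ℝ) ^ N₁ * β ^ k + C₂ * (k : ℝ) ^ N₂ * β ^ k := add_le_add (hu k hk) (hv k hk)
    _ ≤ C₁ * (k : ℝ) ^ (N₁ + N₂) * β ^ k + C₂ * (k : ℝ) ^ (N₁ + N₂) * β ^ k := by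
      gcongr <;> first | exact hk1 | omega
    _ = (C₁ + C₂) * (k : ℝ) ^ (N₁ + N₂) * β ^ k := by ring

lemma mul_poly (q : ℝ[X]) (hu : IsPolyGeomBounded β u) :
    IsPolyGeomBounded β fun k => q.eval (k : ℝ) * u k := by
  obtain ⟨C, N, hC, hu⟩ := hu
  obtain ⟨A, hA, hq⟩ := q.exists_abs_eval_le
  refine ⟨A * C, q.natDegree + N, by positivity, fun k hk => ?_⟩
  calc |q.eval (k : ℝ) * u k| = |q.eval (k : ℝ)| * |u k| := abs_mul _ _
    _ ≤ (A * (k : ℝ) ^ q.natDegree) * (C * (k : ℝ) ^ N * β ^ k) :=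
      mul_le_mul (hq k (by exact_mod_cast hk)) (hu k hk) (abs_nonneg _) (by positivity)
    _ = A * C * (k : ℝ) ^ (q.natDegree + N) * β ^ k := by ring

lemma seqConv (hβ : 0 ≤ β) (hu : IsPolyGeomBounded β u) (hv : IsPolyGeomBounded β v) :
    IsPolyGeomBounded β (seqConv u v) := by
  obtain ⟨C₁, N₁, hC₁, hu⟩ := hu
  obtain ⟨C₂, N₂, hC₂, hv⟩ := hv
  refine ⟨C₁ * C₂, N₁ + N₂ + 1, by positivity, fun k hk => ?_⟩
  have hterm : ∀ j ∈ Ico 1 k, |u j * v (k - j)| ≤ C₁ * C₂ * (k : ℝ) ^ (N₁ + N₂) * β ^ k := by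
    intro j hj
    obtain ⟨hj1, hjk⟩ := mem_Ico.1 hj
    have hj : (j : ℝ) ≤ k := by exact_mod_cast hjk.le
    have hkj : ((k - j : ℕ) : ℝ) ≤ k := by exact_mod_cast Nat.sub_le k j
    calc |u j * v (k - j)| = |u j| * |v (k - j)| := abs_mul _ _
      _ ≤ (C₁ * (j : ℝ) ^ N₁ * β ^ j) * (C₂ * ((k - j : ℕ) : ℝ) ^ N₂ * β ^ (k - j)) :=
        mul_le_mul (hu j hj1) (hv _ (by omega)) (abs_nonneg _) (by positivity)
      _ ≤ (C₁ * (k : ℝ) ^ N₁ * β ^ j) * (C₂ * (k : ℝ) ^ N₂ * β ^ (k - j)) := by gcongr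
      _ = C₁ * C₂ * (k : ℝ) ^ (N₁ + N₂) * (β ^ j * β ^ (k - j)) := by ring
      _ = C₁ * C₂ * (k : ℝ) ^ (N₁ + N₂) * β ^ k := by rw [pow_mul_pow_sub β hjk.le]
  calc |_root_.seqConv u v k| ≤ ∑ j ∈ Ico 1 k, |u j * v (k - j)| := abs_sum_le_sum_abs _ _
    _ ≤ #(Ico 1 k) • (C₁ * C₂ * (k : ℝ) ^ (N₁ + N₂) * β ^ k) := sum_le_card_nsmul _ _ _ hterm
    _ ≤ (k : ℝ) * (C₁ * C₂ * (k : ℝ) ^ (N₁ + N₂) * β ^ k) := by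
      rw [Nat.card_Ico, nsmul_eq_mul]
      gcongr
      exact_mod_cast Nat.sub_le k 1
    _ = C₁ * C₂ * (k : ℝ) ^ (N₁ + N₂ + 1) * β ^ k := by ring

lemma exists_sum_Ico_sub (hβ0 : 0 < β) (hβ1 : β < 1) (hu : IsPolyGeomBounded β u) :
    ∃ S, IsPolyGeomBounded β fun k => ∑ j ∈ Ico 1 k, u j - S := by
  obtain ⟨C, N, hC, hu⟩ := hu
  set g : ℕ → ℝ := fun m => ((m : ℝ) + 1) ^ N * β ^ m
  have hg := summable_add_one_pow_mul_geometric hβ0 hβ1 N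
  have htail : ∀ k, 1 ≤ k → ∀ m, ‖u (m + k)‖ ≤ C * (k : ℝ) ^ N * β ^ k * g m := by
    intro k hk m
    have hmk : ((m + k : ℕ) : ℝ) ≤ k * (m + 1) := by
      have : (1 : ℝ) ≤ k := by exact_mod_cast hk
      push_cast
      nlinarith
    calc ‖u (m + k)‖ ≤ C * ((m + k : ℕ) : ℝ) ^ N * β ^ (m + k) := hu _ (by omega)
      _ ≤ C * ((k : ℝ) * (m + 1)) ^ N * β ^ (m + k) := by gcongr
      _ = C * (k : ℝ) ^ N * β ^ k * g m := by rw [mul_pow, pow_add]; ring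
  have hsum : Summable fun m => u (m + 1) :=
    (hg.mul_left _).of_norm_bounded (htail 1 le_rfl)
  refine ⟨∑' m, u (m + 1), C * ∑' m, g m, N, by positivity, fun k hk => ?_⟩
  have hsplit : ∑ j ∈ Ico 1 k, u j - ∑' m, u (m + 1) = -∑' m, u (m + k) := by
    rw [← hsum.sum_add_tsum_nat_add (k - 1), sum_Ico_eq_sum_range]
    simp only [add_comm 1, add_assoc, Nat.sub_add_cancel hk]
    ring
  beta_reduce
  rw [hsplit, abs_neg]
  calc |∑' m, u (m + k)| ≤ C * (k : ℝ) ^ N * β ^ k * ∑' m, g m :=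
      tsum_of_norm_bounded (hg.hasSum.mul_left _) (htail k hk)
    _ = C * (∑' m, g m) * (k : ℝ) ^ N * β ^ k := by ring

end IsPolyGeomBounded

namespace HasPolyAsymptotics

variable {β : ℝ} {u v : ℕ → ℝ}

lemma of_isPolyGeomBounded (hu : IsPolyGeomBounded β u) : HasPolyAsymptotics β u :=
  ⟨0, by simpa using hu⟩

lemma add (hβ : 0 ≤ β) (hu : HasPolyAsymptotics β u) (hv : HasPolyAsymptotics β v) :
    HasPolyAsymptotics β (u + v) := by
  obtain ⟨p, hu⟩ := hu
  obtain ⟨q, hv⟩ := hv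
  refine ⟨p + q, (hu.add hβ hv).congr fun k _ => ?_⟩
  simp only [Pi.add_apply, eval_add]
  ring

lemma finset_sum {ι : Type*} (hβ : 0 ≤ β) (s : Finset ι) {u : ι → ℕ → ℝ}
    (hu : ∀ i ∈ s, HasPolyAsymptotics β (u i)) :
    HasPolyAsymptotics β fun k => ∑ i ∈ s, u i k := by
  classical
  induction s using Finset.induction_on with
  | empty => exact of_isPolyGeomBounded (by simpa using IsPolyGeomBounded.zero)
  | insert a s ha ih =>
    simp only [sum_insert ha]
    exact (hu a (mem_insert_self a s)).add hβ (ih fun i hi => hu i (mem_insert_of_mem hi))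

lemma mul_poly (q : ℝ[X]) (hu : HasPolyAsymptotics β u) :
    HasPolyAsymptotics β fun k => q.eval (k : ℝ) * u k := by
  obtain ⟨p, hu⟩ := hu
  refine ⟨q * p, (hu.mul_poly q).congr fun k _ => ?_⟩
  simp only [eval_mul]
  ring

lemma sum_Ico (hβ0 : 0 < β) (hβ1 : β < 1) (hu : HasPolyAsymptotics β u) :
    HasPolyAsymptotics β fun k => ∑ j ∈ Ico 1 k, u j := by
  obtain ⟨p, hu⟩ := hu
  obtain ⟨S, hS⟩ := hu.exists_sum_Ico_sub hβ0 hβ1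
  obtain ⟨P, hP⟩ := p.exists_sum_range_eval_eq_eval
  refine ⟨P - C (p.eval 0) + C S, hS.congr fun k hk => ?_⟩
  have hrange : ∑ j ∈ range k, p.eval (j : ℝ) = p.eval 0 + ∑ j ∈ Ico 1 k, p.eval (j : ℝ) := by
    rw [range_eq_Ico, sum_eq_sum_Ico_succ_bot hk, Nat.cast_zero]
  simp only [eval_add, eval_sub, eval_C, ← hP k, hrange, sum_sub_distrib]
  ring

lemma seqConv_poly (hβ0 : 0 < β) (hβ1 : β < 1) (hu : HasPolyAsymptotics β u) (q : ℝ[X]) :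
    HasPolyAsymptotics β (seqConv u fun k => q.eval (k : ℝ)) := by
  have htaylor : (seqConv u fun k => q.eval (k : ℝ)) = fun k : ℕ =>
      ∑ i ∈ range (q.natDegree + 1),
        (hasseDeriv i q).eval (k : ℝ) * ∑ j ∈ Ico 1 k, ((-X) ^ i : ℝ[X]).eval (j : ℝ) * u j := by
    funext k
    simp only [_root_.seqConv, mul_sum]
    rw [sum_comm]
    refine sum_congr rfl fun j hj => ?_
    rw [Nat.cast_sub (mem_Ico.1 hj).2.le, eval_sub_eq_sum_hasseDeriv, mul_sum]
    refine sum_congr rfl fun i _ => ?_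
    simp only [eval_pow, eval_neg, eval_X]
    ring
  rw [htaylor]
  exact finset_sum hβ0.le _ fun i _ =>
    ((hu.mul_poly _).sum_Ico hβ0 hβ1).mul_poly _

lemma seqConv (hβ0 : 0 < β) (hβ1 : β < 1) (hu : HasPolyAsymptotics β u)
    (hv : HasPolyAsymptotics β v) : HasPolyAsymptotics β (seqConv u v) := by
  have ⟨p, he⟩ := hu
  obtain ⟨q, he'⟩ := hv
  set e := fun k => u k - p.eval (k : ℝ)
  set e' := fun k => v k - q.eval (k : ℝ)
  have hu_eq : u = (fun k : ℕ => p.eval (k : ℝ)) + e := by funext k; simp [e]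
  have hv_eq : v = (fun k : ℕ => q.eval (k : ℝ)) + e' := by funext k; simp [e']
  have hsplit : _root_.seqConv e' u =
      _root_.seqConv e' (fun k => p.eval (k : ℝ)) + _root_.seqConv e' e := by
    rw [← seqConv_add_right, ← hu_eq]
  rw [hv_eq, seqConv_add_right, seqConv_comm u e', hsplit]
  exact (hu.seqConv_poly hβ0 hβ1 q).add hβ0.le
    (((of_isPolyGeomBounded he').seqConv_poly hβ0 hβ1 p).add hβ0.le
      (of_isPolyGeomBounded (he'.seqConv hβ0.le he)))

end HasPolyAsymptotics

lemma isRamanujan_iff_hasPolyAsymptotics {D α : ℝ} {f : ℕ → ℝ} (hD : 0 < D) (hα : 0 ≤ α) :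
    IsRamanujan D α f ↔ HasPolyAsymptotics (α / D) fun k => f k / D ^ k := by
  have hscale : ∀ (p : ℝ[X]) (k : ℕ),
      |f k - D ^ k * p.eval (k : ℝ)| = D ^ k * |f k / D ^ k - p.eval (k : ℝ)| := by
    intro p k
    rw [← abs_of_pos (pow_pos hD k), ← abs_mul, abs_of_pos (pow_pos hD k), mul_sub,
      mul_div_cancel₀ _ (pow_pos hD k).ne']
  have hgeom : ∀ k : ℕ, α ^ k = D ^ k * (α / D) ^ k := fun k => by
    rw [← mul_pow, mul_div_cancel₀ _ hD.ne']
  constructor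
  · rintro ⟨p, c, hc, hf⟩
    refine ⟨p, c, ⌈c⌉₊, hc.le, fun k hk => ?_⟩
    have hk1 : (1 : ℝ) ≤ k := by exact_mod_cast hk
    have hpow : (k : ℝ) ^ c ≤ (k : ℝ) ^ ⌈c⌉₊ := by
      rw [← Real.rpow_natCast]
      exact Real.rpow_le_rpow_of_exponent_le hk1 (Nat.le_ceil c)
    have hf := hf k hk
    rw [hscale, hgeom, mul_left_comm] at hf
    calc |f k / D ^ k - p.eval (k : ℝ)| ≤ c * (k : ℝ) ^ c * (α / D) ^ k :=
          le_of_mul_le_mul_left hf (pow_pos hD k)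
      _ ≤ c * (k : ℝ) ^ ⌈c⌉₊ * (α / D) ^ k := by gcongr
  · rintro ⟨p, C, N, hC, hf⟩
    refine ⟨p, C + N + 1, by positivity, fun k hk => ?_⟩
    have hk1 : (1 : ℝ) ≤ k := by exact_mod_cast hk
    have hpow : (k : ℝ) ^ N ≤ (k : ℝ) ^ (C + N + 1) := by
      rw [← Real.rpow_natCast]
      exact Real.rpow_le_rpow_of_exponent_le hk1 (by linarith)
    rw [hscale, hgeom, mul_left_comm]
    calc D ^ k * |f k / D ^ k - p.eval (k : ℝ)| ≤ D ^ k * (C * (k : ℝ) ^ N * (α / D) ^ k) := by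
          gcongr
          exact hf k hk
      _ ≤ D ^ k * ((C + N + 1) * (k : ℝ) ^ (C + N + 1) * (α / D) ^ k) := by
          gcongr
          linarith

theorem IsRamanujan.seqConv {D α : ℝ} {f₁ f₂ : ℕ → ℝ} (hα : 0 < α) (hαD : α < D)
    (h₁ : IsRamanujan D α f₁) (h₂ : IsRamanujan D α f₂) : IsRamanujan D α (seqConv f₁ f₂) := by
  have hD : 0 < D := hα.trans hαD
  rw [isRamanujan_iff_hasPolyAsymptotics hD hα.le] at h₁ h₂ ⊢
  rw [seqConv_div_pow hD.ne']
  exact h₁.seqConv (div_pos hα hD) ((div_lt_one hD).2 hαD) h₂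

theorem stmt19_general (d : ℕ) (α : ℝ) (hα1 : 1 ≤ α) (hα2 : α < (d : ℝ) - 1)
    (f₁ f₂ : ℕ → ℝ)
    (h₁ : ∃ (p : Polynomial ℝ) (c : ℝ), 0 < c ∧ ∀ k : ℕ, 1 ≤ k →
      |f₁ k - ((d : ℝ) - 1) ^ k * p.eval (k : ℝ)| ≤ c * (k : ℝ) ^ c * α ^ k)
    (h₂ : ∃ (p : Polynomial ℝ) (c : ℝ), 0 < c ∧ ∀ k : ℕ, 1 ≤ k →
      |f₂ k - ((d : ℝ) - 1) ^ k * p.eval (k : ℝ)| ≤ c * (k : ℝ) ^ c * α ^ k) :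
    ∃ (p : Polynomial ℝ) (c' : ℝ), 0 < c' ∧ ∀ k : ℕ, 1 ≤ k →
      |(∑ j ∈ Finset.Ico 1 k, f₁ j * f₂ (k - j)) - ((d : ℝ) - 1) ^ k * p.eval (k : ℝ)|
        ≤ c' * (k : ℝ) ^ c' * α ^ k :=
  IsRamanujan.seqConv (by linarith) hα2 h₁ h₂

/-- Fix `d > 2` and `1 ≤ α < d−1`.  If `f₁, f₂ : ℕ₊ → ℝ` are `d`-Ramanujan of
order `α`, i.e. `f_i(k) = (d−1)^k p_i(k) + e_i(k)` with `p_i` a polynomial and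
`|e_i(k)| ≤ c k^c α^k`, then the convolution `g(k) = Σ_{j=1}^{k−1} f₁(j) f₂(k−j)` is also
`d`-Ramanujan of order `α`. -/
theorem stmt19 (d : ℕ) (hd : 2 < d) (α : ℝ) (hα1 : 1 ≤ α) (hα2 : α < (d : ℝ) - 1)
    (f₁ f₂ : ℕ → ℝ)
    (h₁ : ∃ (p : Polynomial ℝ) (c : ℝ), 0 < c ∧ ∀ k : ℕ, 1 ≤ k →
      |f₁ k - ((d : ℝ) - 1) ^ k * p.eval (k : ℝ)| ≤ c * (k : ℝ) ^ c * α ^ k)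
    (h₂ : ∃ (p : Polynomial ℝ) (c : ℝ), 0 < c ∧ ∀ k : ℕ, 1 ≤ k →
      |f₂ k - ((d : ℝ) - 1) ^ k * p.eval (k : ℝ)| ≤ c * (k : ℝ) ^ c * α ^ k) :
    ∃ (p : Polynomial ℝ) (c' : ℝ), 0 < c' ∧ ∀ k : ℕ, 1 ≤ k →
      |(∑ j ∈ Finset.Ico 1 k, f₁ j * f₂ (k - j)) - ((d : ℝ) - 1) ^ k * p.eval (k : ℝ)|
        ≤ c' * (k : ℝ) ^ c' * α ^ k :=
  stmt19_general d α hα1 hα2 f₁ f₂ h₁ h₂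
end
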